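/- arXiv:2110.12739 — 3 statements merged into one kernel-verified Lean document; each statement's English description precedes it below -/
import Mathlib

section
/- Let Z be a centered process on [0,1] whose law belongs to R_α(L) for some α ∈ (0,1] and L > 0, with covariance operator Γ and covariance kernel K. For the histogram system of dimension D, ‖Π_D Γ Π_D − Γ‖_∞² ≤ (16 L ‖K‖_∞/(α+1)²) D^{−2α}, where ‖·‖_∞ denotes the operator norm on L²([0,1]). -/
open MeasureTheory ProbabilityTheory

noncomputable section

/-- The unit interval `[0,1]` as a subset of `ℝ`. -/
def unitI : Set ℝ := Set.Icc 0 1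

/-- Covariance kernel of the canonical process `ω ↦ ω t` under a law `P` on `ℝ → ℝ`. -/
def covK (P : Measure (ℝ → ℝ)) (s t : ℝ) : ℝ := ∫ ω, ω s * ω t ∂P

/-- Sup norm `‖K‖_∞` of a kernel over `[0,1]²`. -/
def KsupK (K : ℝ → ℝ → ℝ) : ℝ :=
  sSup {x | ∃ s ∈ unitI, ∃ t ∈ unitI, x = |K s t|}

/-- The law `P` of a centered process with finite second moments belongs to `R_α(L)`. -/
def memReg (α L : ℝ) (P : Measure (ℝ → ℝ)) : Prop :=
  IsProbabilityMeasure P ∧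
  (∀ t ∈ unitI, Integrable (fun ω => (ω t) ^ 2) P) ∧
  (∀ t ∈ unitI, (∫ ω, ω t ∂P) = 0) ∧
  ∀ s ∈ unitI, ∀ t ∈ unitI, (∫ ω, (ω t - ω s) ^ 2 ∂P) ≤ L * |t - s| ^ (2 * α)

/-- `P` is the law of a (centered) Gaussian process on `[0,1]`. -/
def isGaussP (P : Measure (ℝ → ℝ)) : Prop :=
  ∀ (m : ℕ) (c ts : Fin m → ℝ), (∀ i, ts i ∈ unitI) →
    Measure.map (fun ω => ∑ i, c i * ω (ts i)) P
      = gaussianReal 0 (Real.toNNReal (∫ ω, (∑ i, c i * ω (ts i)) ^ 2 ∂P))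

/-- The regular grid point `t_h = h/(p-1)`. -/
def grid (p : ℕ) (h : Fin p) : ℝ := ((h : ℕ) : ℝ) / ((p : ℝ) - 1)

/-- Sample space for `n` i.i.d. curves and the i.i.d. Gaussian noise array. -/
abbrev ObsSpace (n p : ℕ) : Type := (Fin n → (ℝ → ℝ)) × (Fin n → Fin p → ℝ)

/-- Joint law of `n` i.i.d. copies of the process of law `P` together with
i.i.d. `N(0,σ²)` noise variables. -/
def obsMeasure (P : Measure (ℝ → ℝ)) (σ : ℝ) (n p : ℕ) : Measure (ObsSpace n p) :=
  (Measure.pi fun _ => P).prod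
    (Measure.pi fun _ => Measure.pi fun _ => gaussianReal 0 (Real.toNNReal (σ ^ 2)))

/-- The observations `Y_i(t_h) = Z_i(t_h) + ε_{i,h}`. -/
def Yobs {n p : ℕ} (ω : ObsSpace n p) : Fin n → Fin p → ℝ :=
  fun i h => ω.1 i (grid p h) + ω.2 i h

/-- Integral operator on `L²([0,1])` with kernel `R`. -/
def intOp (R : ℝ → ℝ → ℝ) (f : ℝ → ℝ) (t : ℝ) : ℝ := ∫ s in unitI, R s t * f s

/-- Orthogonal projection `Π_D` onto `span(φ_λ, λ ∈ Λ_D)`. -/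
def projD {D : ℕ} (φ : Fin D → ℝ → ℝ) (f : ℝ → ℝ) (t : ℝ) : ℝ :=
  ∑ l, (∫ s in unitI, φ l s * f s) * φ l t

/-- Operator norm on `L²([0,1])` of a map on functions. -/
def opNorm (T : (ℝ → ℝ) → ℝ → ℝ) : ℝ :=
  sSup {x | ∃ f : ℝ → ℝ, Measurable f ∧ (∫ t in unitI, (f t) ^ 2) ≤ 1 ∧
    x = Real.sqrt (∫ t in unitI, (T f t) ^ 2)}

/-- `(φ_λ)` is an orthonormal system of `L²([0,1])`. -/
def ONS {D : ℕ} (φ : Fin D → ℝ → ℝ) : Prop :=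
  (∀ l, Measurable (φ l)) ∧
  ∀ l l', (∫ t in unitI, φ l t * φ l' t) = if l = l' then (1 : ℝ) else 0

/-- Empirical coefficients `ỹ_{i,λ} = p⁻¹ ∑_h Y_i(t_h) φ_λ(t_h)`. -/
def ytil {n p D : ℕ} (φ : Fin D → ℝ → ℝ) (ω : ObsSpace n p) (i : Fin n) (l : Fin D) : ℝ :=
  ((p : ℝ))⁻¹ * ∑ h, Yobs ω i h * φ l (grid p h)

/-- Reconstructed curve `Ỹ_i = ∑_λ ỹ_{i,λ} φ_λ`. -/
def Ytil {n p D : ℕ} (φ : Fin D → ℝ → ℝ) (ω : ObsSpace n p) (i : Fin n) (t : ℝ) : ℝ :=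
  ∑ l, ytil φ ω i l * φ l t

/-- Empirical covariance kernel `K̂_φ(s,t) = n⁻¹ ∑ᵢ Ỹ_i(s) Ỹ_i(t)`. -/
def Khat {n p D : ℕ} (φ : Fin D → ℝ → ℝ) (ω : ObsSpace n p) (s t : ℝ) : ℝ :=
  ((n : ℝ))⁻¹ * ∑ i, Ytil φ ω i s * Ytil φ ω i t

/-- Empirical coefficient matrix `Ĝ_φ = (n⁻¹ ∑ᵢ ỹ_{i,λ} ỹ_{i,λ'})_{λ,λ'}`. -/
def Ghat {n p D : ℕ} (φ : Fin D → ℝ → ℝ) (ω : ObsSpace n p) (l l' : Fin D) : ℝ :=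
  ((n : ℝ))⁻¹ * ∑ i, ytil φ ω i l * ytil φ ω i l'

/-- `σ_λ² = (σ²/p²) ∑_h φ_λ(t_h)²`. -/
def sig2 {D : ℕ} (σ : ℝ) (p : ℕ) (φ : Fin D → ℝ → ℝ) (l : Fin D) : ℝ :=
  σ ^ 2 / (p : ℝ) ^ 2 * ∑ h : Fin p, (φ l (grid p h)) ^ 2

/-- `s_λ² = p⁻² ∑_{h,h'} K(t_h,t_{h'}) φ_λ(t_h) φ_λ(t_{h'})`. -/
def ss2 {D : ℕ} (K : ℝ → ℝ → ℝ) (p : ℕ) (φ : Fin D → ℝ → ℝ) (l : Fin D) : ℝ :=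
  ((p : ℝ) ^ 2)⁻¹ * ∑ h : Fin p, ∑ h' : Fin p,
    K (grid p h) (grid p h') * φ l (grid p h) * φ l (grid p h')

/-- Discretization term `A_p^{(K)}(φ, D)`. -/
def ApK {D : ℕ} (K : ℝ → ℝ → ℝ) (p : ℕ) (φ : Fin D → ℝ → ℝ) : ℝ :=
  ∑ l, ∑ l', (((p : ℝ) ^ 2)⁻¹ * (∑ h : Fin p, ∑ h' : Fin p,
      K (grid p h) (grid p h') * φ l (grid p h) * φ l' (grid p h'))
    - ∫ s in unitI, ∫ t in unitI, K s t * φ l s * φ l' t) ^ 2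

/-- Discretization term `A_p^{(σ)}(φ, D)`. -/
def Apsig {D : ℕ} (σ : ℝ) (p : ℕ) (φ : Fin D → ℝ → ℝ) : ℝ :=
  σ ^ 4 / (p : ℝ) ^ 2 * ∑ l, ∑ l',
    (((p : ℝ))⁻¹ * (∑ h : Fin p, φ l (grid p h) * φ l' (grid p h))
      - if l = l' then (1 : ℝ) else 0) ^ 2

/-- Assumption (A4): fourth-moment bound on the grid vector of the process. -/
def A4 (P : Measure (ℝ → ℝ)) (p : ℕ) (C1 : ℝ) : Prop :=
  ∀ v : Fin p → ℝ,
    (∫ ω, (∑ h, v h * ω (grid p h)) ^ 4 ∂P)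
      ≤ C1 * (∫ ω, (∑ h, v h * ω (grid p h)) ^ 2 ∂P) ^ 2

/-- Sub-Gaussian norm `‖W‖_{ψ₂} = sup_{q ≥ 1} q^{-1/2} (E|W|^q)^{1/q}`. -/
def sgNorm {X : Type*} [MeasurableSpace X] (P : Measure X) (W : X → ℝ) : ℝ :=
  sSup {x | ∃ q : ℝ, 1 ≤ q ∧ x = q ^ (-(2 : ℝ)⁻¹) * (∫ ω, |W ω| ^ q ∂P) ^ q⁻¹}

/-- Assumption (Aq): sub-Gaussian control of the grid vector of the process. -/
def Aq (P : Measure (ℝ → ℝ)) (p : ℕ) (C2 : ℝ) : Prop :=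
  ∀ v : Fin p → ℝ,
    (sgNorm P (fun ω => ∑ h, v h * ω (grid p h))) ^ 2
      ≤ C2 * ∫ ω, (∑ h, v h * ω (grid p h)) ^ 2 ∂P

/-- The spectral gap quantity `b_d` (here `d` is a 0-based index: `bGap μ d` is `b_{d+1}`
of the paper). -/
def bGap (μ : ℕ → ℝ) (d : ℕ) : ℝ :=
  if d = 0 then 8 / (μ 0 - μ 1) ^ 2
  else 8 / min (μ d - μ (d + 1)) (μ (d - 1) - μ d) ^ 2

/-- `(μ, η)` is a spectral decomposition of the integral operator with kernel `R`:
orthonormal eigenfunctions and `R(s,t) = ∑ μ_d η_d(s) η_d(t)`. -/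
def specDecomp (R : ℝ → ℝ → ℝ) (μ : ℕ → ℝ) (η : ℕ → ℝ → ℝ) : Prop :=
  (∀ d, Measurable (η d)) ∧
  (∀ d d', (∫ t in unitI, η d t * η d' t) = if d = d' then (1 : ℝ) else 0) ∧
  (∀ d, ∀ t ∈ unitI, (∫ s in unitI, R s t * η d s) = μ d * η d t) ∧
  (∀ s ∈ unitI, ∀ t ∈ unitI, R s t = ∑' d, μ d * η d s * η d t)

/-- The histogram system `φ_λ = √D · 1_{(λ/D, (λ+1)/D]}`. -/
def histφ (D : ℕ) (l : Fin D) : ℝ → ℝ :=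
  Set.indicator (Set.Ioc (((l : ℕ) : ℝ) / D) ((((l : ℕ) : ℝ) + 1) / D))
    (fun _ => Real.sqrt D)

/-!
By Cauchy–Schwarz and the increment bound, the covariance kernel `K` is bounded by `‖K‖_∞` and
`α`-Hölder in each variable with constant `√(‖K‖_∞ L)`. Let `I_λ = (λ/D, (λ+1)/D]` be the support
of `φ_λ`. For `s ∈ I_λ`, `t ∈ I_λ'` the kernel of `Π_D Γ Π_D` is the mean of `K` over
`I_λ × I_λ'`, so it differs from `K(s,t)` by at most `2 √(‖K‖_∞ L) D^{-α}` (off the null set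
where `s = 0` or `t = 0`). As `[0,1]` has unit length, Cauchy–Schwarz bounds the operator norm of
an integral operator by the sup of its kernel, and `4 ≤ 16 / (α+1)²` for `α ≤ 1`.
-/

theorem sq_integral_mul_le {X : Type*} [MeasurableSpace X] {μ : Measure X} {f g : X → ℝ}
    (hf : MemLp f 2 μ) (hg : MemLp g 2 μ) :
    (∫ x, f x * g x ∂μ) ^ 2 ≤ (∫ x, f x ^ 2 ∂μ) * ∫ x, g x ^ 2 ∂μ := by
  have hfg : Integrable (fun x => f x * g x) μ := hf.integrable_mul hg
  have hquad : ∀ c : ℝ, 0 ≤ (∫ x, g x ^ 2 ∂μ) * (c * c) + 2 * (∫ x, f x * g x ∂μ) * c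
      + ∫ x, f x ^ 2 ∂μ := fun c => by
    have hexp : ∫ x, (f x + c * g x) ^ 2 ∂μ = (∫ x, g x ^ 2 ∂μ) * (c * c)
        + 2 * (∫ x, f x * g x ∂μ) * c + ∫ x, f x ^ 2 ∂μ := by
      have hpt : (fun x => (f x + c * g x) ^ 2)
          = fun x => (f x ^ 2 + 2 * c * (f x * g x)) + c ^ 2 * g x ^ 2 := by
        funext x; ring
      have hint : Integrable (fun x => f x ^ 2 + 2 * c * (f x * g x)) μ :=
        hf.integrable_sq.add (hfg.const_mul _)
      rw [hpt, integral_add hint (hg.integrable_sq.const_mul _),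
        integral_add hf.integrable_sq (hfg.const_mul _),
        integral_const_mul, integral_const_mul]
      ring
    exact hexp ▸ integral_nonneg fun x => sq_nonneg _
  -- the quadratic `c ↦ ∫ (f + c g)²` is nonnegative, so its discriminant is nonpositive
  have := discrim_le_zero hquad
  rw [discrim] at this
  nlinarith

theorem integral_sq_le_of_abs_le {X : Type*} [MeasurableSpace X] {μ : Measure X}
    [IsProbabilityMeasure μ] {g : X → ℝ} {B : ℝ} (hB : ∀ᵐ x ∂μ, |g x| ≤ B) :
    ∫ x, g x ^ 2 ∂μ ≤ B ^ 2 := by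
  have := integral_mono_of_nonneg (Filter.Eventually.of_forall fun x => sq_nonneg (g x))
    (integrable_const (B ^ 2)) (hB.mono fun x hx => sq_le_sq' (abs_le.1 hx).1 (abs_le.1 hx).2)
  simpa using this

theorem abs_integral_mul_le_of_abs_le {X : Type*} [MeasurableSpace X] {μ : Measure X}
    [IsProbabilityMeasure μ] {k f : X → ℝ} {B : ℝ} (hk : AEStronglyMeasurable k μ)
    (hkB : ∀ᵐ x ∂μ, |k x| ≤ B) (hf : MemLp f 2 μ) (hf1 : ∫ x, f x ^ 2 ∂μ ≤ 1) :
    |∫ x, k x * f x ∂μ| ≤ B := by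
  obtain ⟨x, hx⟩ := hkB.exists
  have hB : 0 ≤ B := (abs_nonneg _).trans hx
  refine abs_le_of_sq_le_sq ?_ hB
  calc (∫ x, k x * f x ∂μ) ^ 2 ≤ (∫ x, k x ^ 2 ∂μ) * ∫ x, f x ^ 2 ∂μ :=
        sq_integral_mul_le (MemLp.of_bound hk B hkB) hf
    _ ≤ B ^ 2 * 1 := mul_le_mul (integral_sq_le_of_abs_le hkB) hf1
        (integral_nonneg fun x => sq_nonneg _) (sq_nonneg _)
    _ = B ^ 2 := mul_one _

theorem abs_inv_mul_setIntegral_sub_le {X : Type*} [MeasurableSpace X] {μ : Measure X}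
    {A : Set X} (hA : 0 < μ.real A) {g : X → ℝ} (hg : IntegrableOn g A μ) {c B : ℝ}
    (hgc : ∀ x ∈ A, |g x - c| ≤ B) : |(μ.real A)⁻¹ * ∫ x in A, g x ∂μ - c| ≤ B := by
  have hAfin : μ A < ⊤ := lt_top_iff_ne_top.2 fun h => by simp [Measure.real, h] at hA
  have hsub : (μ.real A)⁻¹ * ∫ x in A, g x ∂μ - c = (μ.real A)⁻¹ * ∫ x in A, (g x - c) ∂μ := by
    rw [integral_sub hg (integrableOn_const hAfin.ne), setIntegral_const, smul_eq_mul]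
    field_simp
  rw [hsub, abs_mul, abs_inv, abs_of_nonneg measureReal_nonneg]
  calc (μ.real A)⁻¹ * |∫ x in A, (g x - c) ∂μ| ≤ (μ.real A)⁻¹ * (B * μ.real A) :=
        mul_le_mul_of_nonneg_left
          (norm_setIntegral_le_of_norm_le_const (f := fun x => g x - c) hAfin hgc) (by positivity)
    _ = B := by field_simp

theorem integral_finset_sum_const_mul {X ι : Type*} [MeasurableSpace X] {μ : Measure X}
    (s : Finset ι) (c : ι → ℝ) {g : ι → X → ℝ} (hg : ∀ i ∈ s, Integrable (g i) μ) :
    ∫ x, ∑ i ∈ s, c i * g i x ∂μ = ∑ i ∈ s, c i * ∫ x, g i x ∂μ := by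
  rw [integral_finsetSum s fun i hi => (hg i hi).const_mul (c i)]
  simp only [integral_const_mul]

theorem integrableOn_mul_of_abs_le {A : Set ℝ} {φ g : ℝ → ℝ} {C : ℝ} (hφ : Measurable φ)
    (hφC : ∀ s, |φ s| ≤ C) (hg : IntegrableOn g A) : IntegrableOn (fun s => φ s * g s) A :=
  hg.bdd_mul hφ.aestronglyMeasurable (Filter.Eventually.of_forall hφC)

theorem continuousOn_of_abs_sub_le_rpow {s : Set ℝ} {F : ℝ → ℝ} {C a : ℝ} (ha : 0 < a)
    (h : ∀ x ∈ s, ∀ y ∈ s, |F x - F y| ≤ C * |x - y| ^ a) :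
    ContinuousOn F s := by
  intro x hx
  have hlim : Filter.Tendsto (fun y => C * |y - x| ^ a) (nhdsWithin x s) (nhds 0) := by
    have : Continuous fun y : ℝ => C * |y - x| ^ a :=
      continuous_const.mul
        ((continuous_id.sub continuous_const).abs.rpow_const fun _ => Or.inr ha.le)
    simpa [Real.zero_rpow ha.ne'] using (this.tendsto x).mono_left nhdsWithin_le_nhds
  rw [ContinuousWithinAt, tendsto_iff_dist_tendsto_zero]
  refine squeeze_zero' (Filter.Eventually.of_forall fun y => dist_nonneg) ?_ hlim
  filter_upwards [self_mem_nhdsWithin] with y hy using h y hy x hx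

theorem continuousOn_setIntegral_of_abs_sub_le {X : Type*} [MeasurableSpace X] {μ : Measure X}
    {A : Set X} {s : Set ℝ} {G : X → ℝ → ℝ} {w : X → ℝ} {a : ℝ} (ha : 0 < a)
    (hA : MeasurableSet A) (hG : ∀ u ∈ s, IntegrableOn (fun x => G x u) A μ)
    (hw : IntegrableOn w A μ)
    (hH : ∀ u ∈ s, ∀ u' ∈ s, ∀ x ∈ A, |G x u - G x u'| ≤ w x * |u - u'| ^ a) :
    ContinuousOn (fun u => ∫ x in A, G x u ∂μ) s := by
  refine continuousOn_of_abs_sub_le_rpow (C := ∫ x in A, w x ∂μ) ha fun u hu u' hu' => ?_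
  rw [← integral_sub (hG u hu) (hG u' hu'), ← integral_mul_const]
  refine (abs_integral_le_integral_abs).trans ?_
  exact setIntegral_mono_on ((hG u hu).sub (hG u' hu')).abs (hw.mul_const _) hA
    (hH u hu u' hu')

theorem zero_mem_unitI : (0 : ℝ) ∈ unitI := ⟨le_rfl, zero_le_one⟩

theorem one_mem_unitI : (1 : ℝ) ∈ unitI := ⟨zero_le_one, le_rfl⟩

theorem measurableSet_unitI : MeasurableSet unitI := measurableSet_Icc

instance : IsProbabilityMeasure (volume.restrict unitI) :=
  ⟨by simp [unitI]⟩

theorem ae_mem_Ioc_unitI : ∀ᵐ s ∂volume.restrict unitI, s ∈ Set.Ioc (0 : ℝ) 1 := by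
  rw [unitI, ← Measure.restrict_congr_set Ioc_ae_eq_Icc]
  exact ae_restrict_mem measurableSet_Ioc

theorem covK_comm (P : Measure (ℝ → ℝ)) (s t : ℝ) : covK P s t = covK P t s := by
  simp only [covK, mul_comm]

namespace memReg

variable {P : Measure (ℝ → ℝ)} {α L : ℝ} (hreg : memReg α L P)
include hreg

theorem memLp_eval {t : ℝ} (ht : t ∈ unitI) : MemLp (fun ω : ℝ → ℝ => ω t) 2 P :=
  (memLp_two_iff_integrable_sq (measurable_pi_apply t).aestronglyMeasurable).2 (hreg.2.1 t ht)

theorem const_nonneg : 0 ≤ L := by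
  have h := hreg.2.2.2 0 zero_mem_unitI 1 one_mem_unitI
  simp only [sub_zero, abs_one, Real.one_rpow, mul_one] at h
  exact (integral_nonneg fun ω => sq_nonneg _).trans h

theorem sq_covK_le {s t : ℝ} (hs : s ∈ unitI) (ht : t ∈ unitI) :
    covK P s t ^ 2 ≤ covK P s s * covK P t t := by
  simpa only [covK, ← sq] using sq_integral_mul_le (hreg.memLp_eval hs) (hreg.memLp_eval ht)

theorem covK_self_le (hα : 0 ≤ α) {t : ℝ} (ht : t ∈ unitI) :
    covK P t t ≤ 2 * covK P 0 0 + 2 * L := by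
  have h0 := hreg.memLp_eval zero_mem_unitI
  have hincr : ∫ ω, (ω t - ω 0) ^ 2 ∂P ≤ L := by
    refine (hreg.2.2.2 0 zero_mem_unitI t ht).trans (mul_le_of_le_one_right hreg.const_nonneg ?_)
    rw [sub_zero, abs_of_nonneg ht.1]
    exact Real.rpow_le_one ht.1 ht.2 (by positivity)
  have hincr_int : Integrable (fun ω : ℝ → ℝ => (ω t - ω 0) ^ 2) P :=
    ((hreg.memLp_eval ht).sub h0).integrable_sq
  have hint : ∫ ω, 2 * ω 0 ^ 2 + 2 * (ω t - ω 0) ^ 2 ∂P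
      = 2 * covK P 0 0 + 2 * ∫ ω, (ω t - ω 0) ^ 2 ∂P := by
    rw [integral_add (h0.integrable_sq.const_mul 2) (hincr_int.const_mul 2), integral_const_mul,
      integral_const_mul, covK]
    simp only [sq]
  have hmono : covK P t t ≤ ∫ ω, 2 * ω 0 ^ 2 + 2 * (ω t - ω 0) ^ 2 ∂P :=
    integral_mono (by simpa only [sq] using (hreg.memLp_eval ht).integrable_sq)
      ((h0.integrable_sq.const_mul 2).add (hincr_int.const_mul 2))
      fun ω => by nlinarith [sq_nonneg (ω t - 2 * ω 0)]
  linarith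

theorem abs_covK_le (hα : 0 ≤ α) {s t : ℝ} (hs : s ∈ unitI) (ht : t ∈ unitI) :
    |covK P s t| ≤ 2 * covK P 0 0 + 2 * L := by
  have hself : ∀ u, 0 ≤ covK P u u := fun u => integral_nonneg fun ω => mul_self_nonneg _
  have hKs := hreg.covK_self_le hα hs
  have hKt := hreg.covK_self_le hα ht
  refine abs_le_of_sq_le_sq ((hreg.sq_covK_le hs ht).trans ?_) (by linarith [hself 0, hself s])
  rw [sq]
  exact mul_le_mul hKs hKt (hself t) (by linarith [hself 0, hself s])

theorem abs_covK_le_KsupK (hα : 0 ≤ α) {s t : ℝ} (hs : s ∈ unitI) (ht : t ∈ unitI) :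
    |covK P s t| ≤ KsupK (covK P) :=
  le_csSup ⟨_, by rintro x ⟨s, hs, t, ht, rfl⟩; exact hreg.abs_covK_le hα hs ht⟩
    ⟨s, hs, t, ht, rfl⟩

theorem KsupK_nonneg (hα : 0 ≤ α) : 0 ≤ KsupK (covK P) :=
  (abs_nonneg _).trans (hreg.abs_covK_le_KsupK hα zero_mem_unitI zero_mem_unitI)

theorem abs_covK_sub_le (hα : 0 ≤ α) {s s' t : ℝ} (hs : s ∈ unitI) (hs' : s' ∈ unitI)
    (ht : t ∈ unitI) :
    |covK P s t - covK P s' t| ≤ √(KsupK (covK P) * L) * |s - s'| ^ α := by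
  have hdiff : covK P s t - covK P s' t = ∫ ω, (ω s - ω s') * ω t ∂P := by
    simp only [covK, sub_mul]
    exact (integral_sub ((hreg.memLp_eval hs).integrable_mul (hreg.memLp_eval ht))
      ((hreg.memLp_eval hs').integrable_mul (hreg.memLp_eval ht))).symm
  have hsq : (covK P s t - covK P s' t) ^ 2 ≤ (√(KsupK (covK P) * L) * |s - s'| ^ α) ^ 2 := by
    have hKt : ∫ ω, (ω t) ^ 2 ∂P ≤ KsupK (covK P) := by
      refine (le_abs_self _).trans ?_
      simpa only [covK, ← sq] using hreg.abs_covK_le_KsupK hα ht ht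
    have hpow : (|s - s'| ^ α) ^ 2 = |s - s'| ^ (2 * α) := by
      rw [← Real.rpow_natCast, ← Real.rpow_mul (abs_nonneg _), mul_comm]
      norm_num
    rw [hdiff, mul_pow, Real.sq_sqrt (mul_nonneg (hreg.KsupK_nonneg hα) hreg.const_nonneg), hpow]
    calc (∫ ω, (ω s - ω s') * ω t ∂P) ^ 2
        ≤ (∫ ω, (ω s - ω s') ^ 2 ∂P) * ∫ ω, (ω t) ^ 2 ∂P :=
          sq_integral_mul_le ((hreg.memLp_eval hs).sub (hreg.memLp_eval hs')) (hreg.memLp_eval ht)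
      _ ≤ (L * |s - s'| ^ (2 * α)) * KsupK (covK P) :=
          mul_le_mul (hreg.2.2.2 s' hs' s hs) hKt (integral_nonneg fun ω => sq_nonneg _)
            (mul_nonneg hreg.const_nonneg (by positivity))
      _ = _ := by ring
  exact abs_le_of_sq_le_sq hsq (by positivity)

theorem abs_covK_sub_le' (hα : 0 ≤ α) {s t t' : ℝ} (hs : s ∈ unitI) (ht : t ∈ unitI)
    (ht' : t' ∈ unitI) :
    |covK P s t - covK P s t'| ≤ √(KsupK (covK P) * L) * |t - t'| ^ α := by
  rw [covK_comm P s t, covK_comm P s t']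
  exact hreg.abs_covK_sub_le hα ht ht' hs

theorem continuousOn_covK (hα : 0 < α) {t : ℝ} (ht : t ∈ unitI) :
    ContinuousOn (fun s => covK P s t) unitI :=
  continuousOn_of_abs_sub_le_rpow hα fun _ hx _ hy => hreg.abs_covK_sub_le hα.le hx hy ht

theorem integrableOn_covK_mul (hα : 0 < α) {u : ℝ} (hu : u ∈ unitI) {A : Set ℝ}
    (hA : A ⊆ unitI) {g : ℝ → ℝ} (hg : IntegrableOn g A) :
    IntegrableOn (fun s => covK P s u * g s) A := by
  refine hg.bdd_mul (c := KsupK (covK P))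
    (((hreg.continuousOn_covK hα hu).aestronglyMeasurable measurableSet_unitI).mono_set hA) ?_
  filter_upwards [ae_restrict_of_ae_restrict_of_subset hA (ae_restrict_mem measurableSet_unitI)]
    with s hs
  exact hreg.abs_covK_le_KsupK hα.le hs hu

theorem continuousOn_setIntegral_covK_mul (hα : 0 < α) {A : Set ℝ} (hA : MeasurableSet A)
    (hAI : A ⊆ unitI) {g : ℝ → ℝ} (hg : IntegrableOn g A) :
    ContinuousOn (fun u => ∫ s in A, covK P s u * g s) unitI := by
  refine continuousOn_setIntegral_of_abs_sub_le hα hA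
    (fun u hu => hreg.integrableOn_covK_mul hα hu hAI hg)
    (hg.abs.const_mul √(KsupK (covK P) * L)) fun u hu u' hu' s hs => ?_
  rw [← sub_mul, abs_mul, mul_right_comm]
  exact mul_le_mul_of_nonneg_right (hreg.abs_covK_sub_le' hα.le (hAI hs) hu hu') (abs_nonneg _)

end memReg

def histCell (D : ℕ) (l : Fin D) : Set ℝ := Set.Ioc (((l : ℕ) : ℝ) / D) ((((l : ℕ) : ℝ) + 1) / D)

section Histogram

variable {D : ℕ}

theorem histφ_eq_indicator (l : Fin D) :
    histφ D l = (histCell D l).indicator fun _ => √(D : ℝ) := rfl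

theorem measurableSet_histCell (l : Fin D) : MeasurableSet (histCell D l) := measurableSet_Ioc

theorem measurable_histφ (l : Fin D) : Measurable (histφ D l) :=
  measurable_const.indicator (measurableSet_histCell l)

theorem abs_histφ_le (l : Fin D) (s : ℝ) : |histφ D l s| ≤ √(D : ℝ) := by
  rw [histφ_eq_indicator]
  by_cases h : s ∈ histCell D l <;> simp [h, abs_of_nonneg (Real.sqrt_nonneg _)]

theorem histCell_subset_unitI (l : Fin D) : histCell D l ⊆ unitI := by
  rintro x ⟨hx₁, hx₂⟩
  have hl : ((l : ℕ) : ℝ) + 1 ≤ D := by exact_mod_cast l.isLt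
  refine ⟨(by positivity : (0 : ℝ) ≤ ((l : ℕ) : ℝ) / D).trans hx₁.le, hx₂.trans ?_⟩
  exact div_le_one_of_le₀ hl (Nat.cast_nonneg D)

theorem volume_real_histCell (l : Fin D) : volume.real (histCell D l) = (D : ℝ)⁻¹ := by
  rw [histCell, Real.volume_real_Ioc, ← sub_div, add_sub_cancel_left, one_div,
    max_eq_left (by positivity)]

theorem abs_sub_le_of_mem_histCell {l : Fin D} {x y : ℝ} (hx : x ∈ histCell D l)
    (hy : y ∈ histCell D l) : |x - y| ≤ (D : ℝ)⁻¹ := by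
  have hlen : (((l : ℕ) : ℝ) + 1) / D - ((l : ℕ) : ℝ) / D = (D : ℝ)⁻¹ := by
    rw [← sub_div, add_sub_cancel_left, one_div]
  rw [abs_le]
  constructor <;> linarith [hx.1, hx.2, hy.1, hy.2]

theorem eq_of_mem_histCell {l l' : Fin D} {s : ℝ} (h : s ∈ histCell D l)
    (h' : s ∈ histCell D l') : l = l' := by
  have hD : (0 : ℝ) < D := by exact_mod_cast l.pos
  have key : ∀ a b : Fin D, (a : ℕ) < b → s ∈ histCell D a → s ∉ histCell D b := by
    intro a b hab ha hb
    have : ((a : ℕ) : ℝ) + 1 ≤ (b : ℕ) := by exact_mod_cast hab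
    have : (((a : ℕ) : ℝ) + 1) / D ≤ ((b : ℕ) : ℝ) / D := by gcongr
    linarith [ha.2, hb.1]
  rcases lt_trichotomy (l : ℕ) l' with hlt | heq | hgt
  · exact absurd h' (key l l' hlt h)
  · exact Fin.ext heq
  · exact absurd h (key l' l hgt h')

theorem histφ_of_mem {l : Fin D} {s : ℝ} (h : s ∈ histCell D l) : histφ D l s = √(D : ℝ) :=
  Set.indicator_of_mem h _

theorem histφ_of_mem_ne {l l' : Fin D} {s : ℝ} (h : s ∈ histCell D l) (hne : l' ≠ l) :
    histφ D l' s = 0 :=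
  Set.indicator_of_notMem (fun h' => hne (eq_of_mem_histCell h' h)) _

theorem exists_mem_histCell (hD : 0 < D) {s : ℝ} (hs : s ∈ Set.Ioc (0 : ℝ) 1) :
    ∃ l : Fin D, s ∈ histCell D l := by
  have hD' : (0 : ℝ) < D := by exact_mod_cast hD
  set m := ⌈s * D⌉₊
  have hm : 0 < m := Nat.ceil_pos.2 (by nlinarith [hs.1])
  have hmD : m ≤ D := Nat.ceil_le.2 (by nlinarith [hs.2])
  refine ⟨⟨m - 1, by omega⟩, ?_, ?_⟩
  · show ((m - 1 : ℕ) : ℝ) / D < s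
    rw [div_lt_iff₀ hD', Nat.cast_sub hm, Nat.cast_one]
    linarith [Nat.ceil_lt_add_one (by nlinarith [hs.1] : 0 ≤ s * D)]
  · show s ≤ (((m - 1 : ℕ) : ℝ) + 1) / D
    rw [le_div_iff₀ hD', Nat.cast_sub hm, Nat.cast_one, sub_add_cancel]
    exact Nat.le_ceil _

theorem setIntegral_histφ_mul (l : Fin D) (g : ℝ → ℝ) :
    ∫ s in unitI, histφ D l s * g s = √(D : ℝ) * ∫ s in histCell D l, g s := by
  simp_rw [histφ_eq_indicator, ← Set.indicator_mul_left]
  rw [integral_indicator (measurableSet_histCell l),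
    Measure.restrict_restrict (measurableSet_histCell l), Set.inter_eq_self_of_subset_left (histCell_subset_unitI l), integral_const_mul]

end Histogram

def projKernel {D : ℕ} (K : ℝ → ℝ → ℝ) (φ : Fin D → ℝ → ℝ) (s t : ℝ) : ℝ :=
  ∑ l, ∑ l', (∫ u in unitI, φ l' u * intOp K (φ l) u) * φ l s * φ l' t

theorem measurable_projKernel (K : ℝ → ℝ → ℝ) {D : ℕ} {φ : Fin D → ℝ → ℝ}
    (hφ : ∀ l, Measurable (φ l)) (t : ℝ) : Measurable fun s => projKernel K φ s t :=
  Finset.measurable_sum _ fun l _ => Finset.measurable_sum _ fun _ _ =>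
    ((hφ l).const_mul _).mul_const _

theorem memReg.projD_intOp_projD_eq {P : Measure (ℝ → ℝ)} {α L : ℝ} (hreg : memReg α L P)
    (hα : 0 < α) {D : ℕ} {φ : Fin D → ℝ → ℝ} {C : ℝ} (hφ : ∀ l, Measurable (φ l))
    (hφC : ∀ l s, |φ l s| ≤ C) {f : ℝ → ℝ} (hf : IntegrableOn f unitI) (t : ℝ) :
    projD φ (intOp (covK P) (projD φ f)) t = ∫ s in unitI, projKernel (covK P) φ s t * f s := by
  set a : Fin D → ℝ := fun l => ∫ s in unitI, φ l s * f s
  set c : Fin D → Fin D → ℝ := fun l l' => ∫ u in unitI, φ l' u * intOp (covK P) (φ l) u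
  have hφint : ∀ l, IntegrableOn (φ l) unitI := fun l =>
    Integrable.of_bound (hφ l).aestronglyMeasurable C (Filter.Eventually.of_forall (hφC l))
  have hφf : ∀ l, IntegrableOn (fun s => φ l s * f s) unitI := fun l =>
    integrableOn_mul_of_abs_le (hφ l) (hφC l) hf
  have hΓ : ∀ u ∈ unitI, intOp (covK P) (projD φ f) u = ∑ l, a l * intOp (covK P) (φ l) u := by
    intro u hu
    have hpt : (fun s => covK P s u * projD φ f s)
        = fun s => ∑ l, a l * (covK P s u * φ l s) := by
      funext s
      simp only [projD, Finset.mul_sum]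
      exact Finset.sum_congr rfl fun l _ => by ring
    rw [intOp, hpt, integral_finset_sum_const_mul]
    · rfl
    · exact fun l _ => hreg.integrableOn_covK_mul hα hu subset_rfl (hφint l)
  have hcoef : ∀ l', ∫ u in unitI, φ l' u * intOp (covK P) (projD φ f) u = ∑ l, a l * c l l' := by
    intro l'
    have hJ : ∀ l, IntegrableOn (intOp (covK P) (φ l)) unitI := fun l =>
      (hreg.continuousOn_setIntegral_covK_mul hα measurableSet_unitI subset_rfl
        (hφint l)).integrableOn_compact isCompact_Icc
    calc ∫ u in unitI, φ l' u * intOp (covK P) (projD φ f) u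
        = ∫ u in unitI, ∑ l, a l * (φ l' u * intOp (covK P) (φ l) u) :=
          setIntegral_congr_fun measurableSet_unitI fun u hu => by
            simp only [hΓ u hu, Finset.mul_sum]
            exact Finset.sum_congr rfl fun l _ => by ring
      _ = ∑ l, a l * c l l' := integral_finset_sum_const_mul _ _ fun l _ =>
          integrableOn_mul_of_abs_le (hφ l') (hφC l') (hJ l)
  have hker : ∫ s in unitI, projKernel (covK P) φ s t * f s
      = ∑ l, (∑ l', c l l' * φ l' t) * a l := by
    have hpt : (fun s => projKernel (covK P) φ s t * f s)
        = fun s => ∑ l, (∑ l', c l l' * φ l' t) * (φ l s * f s) := by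
      funext s
      simp only [projKernel, Finset.sum_mul]
      exact Finset.sum_congr rfl fun l _ => Finset.sum_congr rfl fun l' _ => by ring
    rw [hpt, integral_finset_sum_const_mul _ _ fun l _ => hφf l]
  simp only [projD, hcoef, hker, Finset.sum_mul]
  rw [Finset.sum_comm]
  exact Finset.sum_congr rfl fun l _ => Finset.sum_congr rfl fun l' _ => by ring

theorem intOp_histφ (K : ℝ → ℝ → ℝ) {D : ℕ} (l : Fin D) (u : ℝ) :
    intOp K (histφ D l) u = √(D : ℝ) * ∫ s in histCell D l, K s u := by
  simp only [intOp, mul_comm (K _ u), setIntegral_histφ_mul]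

theorem projKernel_histφ_of_mem (K : ℝ → ℝ → ℝ) {D : ℕ} {ls lt : Fin D} {s t : ℝ}
    (hs : s ∈ histCell D ls) (ht : t ∈ histCell D lt) :
    projKernel K (histφ D) s t = D * ∫ u in histCell D lt, √(D : ℝ) * intOp K (histφ D ls) u := by
  rw [projKernel, Finset.sum_eq_single ls (fun l _ hl => Finset.sum_eq_zero fun l' _ => by
      rw [histφ_of_mem_ne hs hl, mul_zero, zero_mul]) (by simp),
    Finset.sum_eq_single lt (fun l' _ hl' => by rw [histφ_of_mem_ne ht hl', mul_zero])
      (by simp),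
    histφ_of_mem hs, histφ_of_mem ht, setIntegral_histφ_mul, integral_const_mul]
  have hD : √(D : ℝ) * √(D : ℝ) = D := Real.mul_self_sqrt (Nat.cast_nonneg D)
  linear_combination (∫ u in histCell D lt, intOp K (histφ D ls) u) * √(D : ℝ) * hD

theorem memReg.abs_projKernel_histφ_sub_le {P : Measure (ℝ → ℝ)} {α L : ℝ}
    (hreg : memReg α L P) (hα : 0 < α) {D : ℕ} (hD : 0 < D) {s t : ℝ}
    (hs : s ∈ Set.Ioc (0 : ℝ) 1) (ht : t ∈ Set.Ioc (0 : ℝ) 1) :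
    |projKernel (covK P) (histφ D) s t - covK P s t|
      ≤ 2 * √(KsupK (covK P) * L) * (D : ℝ) ^ (-α) := by
  obtain ⟨ls, hls⟩ := exists_mem_histCell hD hs
  obtain ⟨lt, hlt⟩ := exists_mem_histCell hD ht
  set B := √(KsupK (covK P) * L) * (D : ℝ) ^ (-α)
  have hdiam : ∀ {l : Fin D} {x y : ℝ}, x ∈ histCell D l → y ∈ histCell D l →
      √(KsupK (covK P) * L) * |x - y| ^ α ≤ B := fun hx hy => by
    refine mul_le_mul_of_nonneg_left ?_ (Real.sqrt_nonneg _)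
    rw [Real.rpow_neg (Nat.cast_nonneg D), ← Real.inv_rpow (Nat.cast_nonneg D)]
    exact Real.rpow_le_rpow (abs_nonneg _) (abs_sub_le_of_mem_histCell hx hy) hα.le
  have hcell : ∀ l, histCell D l ⊆ unitI := histCell_subset_unitI
  have hvol : ∀ l, (volume.real (histCell D l))⁻¹ = D := fun l => by
    rw [volume_real_histCell, inv_inv]
  have hvol_pos : ∀ l, 0 < volume.real (histCell D l) := fun l => by
    rw [volume_real_histCell]; positivity
  have hinner : ∀ u ∈ histCell D lt,
      |√(D : ℝ) * intOp (covK P) (histφ D ls) u - covK P s t| ≤ 2 * B := by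
    intro u hu
    have hint : IntegrableOn (fun s' => covK P s' u) (histCell D ls) :=
      ((hreg.continuousOn_covK hα (hcell lt hu)).integrableOn_compact isCompact_Icc).mono_set
        (hcell ls)
    rw [intOp_histφ, ← mul_assoc, Real.mul_self_sqrt (Nat.cast_nonneg D), ← hvol ls]
    refine abs_inv_mul_setIntegral_sub_le (hvol_pos ls) hint fun s' hs' => ?_
    calc |covK P s' u - covK P s t|
        ≤ |covK P s' u - covK P s u| + |covK P s u - covK P s t| := abs_sub_le _ _ _
      _ ≤ B + B := add_le_add
          ((hreg.abs_covK_sub_le hα.le (hcell ls hs') (hcell ls hls) (hcell lt hu)).trans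
            (hdiam hs' hls))
          ((hreg.abs_covK_sub_le' hα.le (hcell ls hls) (hcell lt hu) (hcell lt hlt)).trans
            (hdiam hu hlt))
      _ = 2 * B := by ring
  have hJ : IntegrableOn (fun u => √(D : ℝ) * intOp (covK P) (histφ D ls) u) (histCell D lt) :=
    (((hreg.continuousOn_setIntegral_covK_mul hα measurableSet_unitI subset_rfl
      (Integrable.of_bound (measurable_histφ ls).aestronglyMeasurable _
        (Filter.Eventually.of_forall (abs_histφ_le ls)))).integrableOn_compact
      isCompact_Icc).mono_set (hcell lt)).const_mul _
  have h := abs_inv_mul_setIntegral_sub_le (hvol_pos lt) hJ hinner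
  rw [hvol lt] at h
  rwa [projKernel_histφ_of_mem _ hls hlt, mul_assoc]

theorem memReg.sqrt_integral_sq_projD_intOp_projD_sub_le {P : Measure (ℝ → ℝ)} {α L : ℝ}
    (hreg : memReg α L P) (hα : 0 < α) {D : ℕ} (hD : 0 < D) {f : ℝ → ℝ}
    (hf : MemLp f 2 (volume.restrict unitI)) (hf1 : ∫ t in unitI, f t ^ 2 ≤ 1) :
    √(∫ t in unitI,
        (projD (histφ D) (intOp (covK P) (projD (histφ D) f)) t - intOp (covK P) f t) ^ 2)
      ≤ 2 * √(KsupK (covK P) * L) * (D : ℝ) ^ (-α) := by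
  set B := 2 * √(KsupK (covK P) * L) * (D : ℝ) ^ (-α)
  have hfint : IntegrableOn f unitI := hf.integrable one_le_two
  have hpt : ∀ t ∈ Set.Ioc (0 : ℝ) 1,
      |projD (histφ D) (intOp (covK P) (projD (histφ D) f)) t - intOp (covK P) f t| ≤ B := by
    intro t ht
    have htI : t ∈ unitI := Set.Ioc_subset_Icc_self ht
    set k := fun s => projKernel (covK P) (histφ D) s t - covK P s t
    have hk : AEStronglyMeasurable k (volume.restrict unitI) :=
      (measurable_projKernel _ measurable_histφ t).aestronglyMeasurable.sub
        ((hreg.continuousOn_covK hα htI).aestronglyMeasurable measurableSet_unitI)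
    have hkB : ∀ᵐ s ∂volume.restrict unitI, |k s| ≤ B := ae_mem_Ioc_unitI.mono fun s hs =>
      hreg.abs_projKernel_histφ_sub_le hα hD hs ht
    have hsplit : ∫ s in unitI, projKernel (covK P) (histφ D) s t * f s
        = (∫ s in unitI, k s * f s) + ∫ s in unitI, covK P s t * f s := by
      rw [← integral_add]
      · exact integral_congr_ae (Filter.Eventually.of_forall fun s => by simp only [k]; ring)
      · exact hfint.bdd_mul hk hkB
      · exact hreg.integrableOn_covK_mul hα htI subset_rfl hfint
    have hrepr : projD (histφ D) (intOp (covK P) (projD (histφ D) f)) t - intOp (covK P) f t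
        = ∫ s in unitI, k s * f s := by
      rw [hreg.projD_intOp_projD_eq hα measurable_histφ abs_histφ_le hfint, hsplit, intOp]
      ring
    exact hrepr ▸ abs_integral_mul_le_of_abs_le hk hkB hf hf1
  refine Real.sqrt_le_iff.2 ⟨by positivity, integral_sq_le_of_abs_le ?_⟩
  exact ae_mem_Ioc_unitI.mono hpt

theorem opNorm_nonneg (T : (ℝ → ℝ) → ℝ → ℝ) : 0 ≤ opNorm T :=
  Real.sSup_nonneg fun _ ⟨_, _, _, hx⟩ => hx ▸ Real.sqrt_nonneg _

theorem opNorm_le {T : (ℝ → ℝ) → ℝ → ℝ} {B : ℝ} (hB : 0 ≤ B)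
    (hT : ∀ (c : ℝ) f t, T (fun s => c * f s) t = c * T f t)
    (hbound : ∀ f, MemLp f 2 (volume.restrict unitI) → ∫ t in unitI, f t ^ 2 ≤ 1 →
      √(∫ t in unitI, T f t ^ 2) ≤ B) :
    opNorm T ≤ B := by
  by_cases hbdd : BddAbove {x | ∃ f : ℝ → ℝ, Measurable f ∧ (∫ t in unitI, (f t) ^ 2) ≤ 1 ∧
      x = √(∫ t in unitI, (T f t) ^ 2)}
  · refine csSup_le ⟨_, 0, measurable_const, by simp, rfl⟩ ?_
    rintro x ⟨f, hfm, hf1, rfl⟩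
    by_cases hf : Integrable (fun t => f t ^ 2) (volume.restrict unitI)
    · exact hbound f ((memLp_two_iff_integrable_sq hfm.aestronglyMeasurable).2 hf) hf1
    -- `∫ (c f)²` has the junk value `0`, so every `c * x` with `c > 0` lies in the bounded set
    obtain ⟨M, hM⟩ := hbdd
    have hscale : ∀ c > 0, c * √(∫ t in unitI, T f t ^ 2) ≤ M := fun c hc => by
      refine hM ⟨fun s => c * f s, hfm.const_mul c, ?_, ?_⟩
      · have hcf : ¬Integrable (fun t => (c * f t) ^ 2) (volume.restrict unitI) := by
          simp_rw [mul_pow]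
          rwa [integrable_const_mul_iff (isUnit_iff_ne_zero.2 (pow_ne_zero 2 hc.ne'))]
        rw [integral_undef hcf]
        exact zero_le_one
      · simp only [hT, mul_pow, integral_const_mul, Real.sqrt_mul (sq_nonneg c), Real.sqrt_sq hc.le]
    by_contra! hx
    have hx0 : 0 < √(∫ t in unitI, T f t ^ 2) := hB.trans_lt hx
    have := hscale ((|M| + 1) / √(∫ t in unitI, T f t ^ 2)) (by positivity)
    rw [div_mul_cancel₀ _ hx0.ne'] at this
    linarith [le_abs_self M]
  · rw [opNorm, Real.sSup_of_not_bddAbove hbdd]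
    exact hB

theorem projD_const_mul {D : ℕ} (φ : Fin D → ℝ → ℝ) (c : ℝ) (f : ℝ → ℝ) :
    projD φ (fun s => c * f s) = fun t => c * projD φ f t := by
  funext t
  simp only [projD, mul_left_comm _ c, integral_const_mul, Finset.mul_sum, mul_assoc]

theorem intOp_const_mul (K : ℝ → ℝ → ℝ) (c : ℝ) (f : ℝ → ℝ) :
    intOp K (fun s => c * f s) = fun t => c * intOp K f t := by
  funext t
  simp only [intOp, mul_left_comm _ c, integral_const_mul]

theorem sq_two_mul_sqrt_mul_rpow_le {K L α D : ℝ} (hK : 0 ≤ K) (hL : 0 ≤ L)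
    (hα : α ∈ Set.Icc (0 : ℝ) 1) (hD : 0 ≤ D) :
    (2 * √(K * L) * D ^ (-α)) ^ 2 ≤ 16 * L * K / (α + 1) ^ 2 * D ^ (-(2 * α)) := by
  have hpow : (D ^ (-α)) ^ 2 = D ^ (-(2 * α)) := by
    rw [← Real.rpow_natCast, ← Real.rpow_mul hD]
    ring_nf
  have hcoef : 2 ^ 2 * (K * L) ≤ 16 * L * K / (α + 1) ^ 2 := by
    have hα2 : (α + 1) ^ 2 ≤ 4 := by nlinarith [hα.1, hα.2]
    rw [le_div_iff₀ (by nlinarith [hα.1])]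
    nlinarith [mul_le_mul_of_nonneg_left hα2 (mul_nonneg hK hL)]
  rw [mul_pow, mul_pow, Real.sq_sqrt (mul_nonneg hK hL), hpow]
  exact mul_le_mul_of_nonneg_right hcoef (Real.rpow_nonneg hD _)

theorem stmt7_general
    (P : Measure (ℝ → ℝ)) (α L : ℝ) (hα : α ∈ Set.Ioc (0 : ℝ) 1)
    (hreg : memReg α L P) (D : ℕ) (hD : 0 < D) :
    (opNorm (fun f t => projD (histφ D) (intOp (covK P) (projD (histφ D) f)) t
        - intOp (covK P) f t)) ^ 2
      ≤ 16 * L * KsupK (covK P) / (α + 1) ^ 2 * (D : ℝ) ^ (-(2 * α)) := by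
  have hop : opNorm (fun f t => projD (histφ D) (intOp (covK P) (projD (histφ D) f)) t
      - intOp (covK P) f t) ≤ 2 * √(KsupK (covK P) * L) * (D : ℝ) ^ (-α) :=
    opNorm_le (by positivity) (fun c f t => by simp only [projD_const_mul, intOp_const_mul]; ring)
      fun f hf hf1 => hreg.sqrt_integral_sq_projD_intOp_projD_sub_le hα.1 hD hf hf1
  exact (pow_le_pow_left₀ (opNorm_nonneg _) hop 2).trans
    (sq_two_mul_sqrt_mul_rpow_le (hreg.KsupK_nonneg hα.1.le) hreg.const_nonneg
      (Set.Ioc_subset_Icc_self hα) (Nat.cast_nonneg D))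

/-- Proposition 3, first bound: for the histogram system of dimension `D`, if `P_Z ∈ R_α(L)`
then `‖Π_D Γ Π_D - Γ‖_∞² ≤ 16 L ‖K‖_∞ / (α+1)² · D^{-2α}`. -/
theorem stmt7
    (P : Measure (ℝ → ℝ)) (α L : ℝ) (hα : α ∈ Set.Ioc (0 : ℝ) 1) (hL : 0 < L)
    (hreg : memReg α L P) (D : ℕ) (hD : 0 < D) :
    (opNorm (fun f t => projD (histφ D) (intOp (covK P) (projD (histφ D) f)) t
        - intOp (covK P) f t)) ^ 2
      ≤ 16 * L * KsupK (covK P) / (α + 1) ^ 2 * (D : ℝ) ^ (-(2 * α)) :=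
  stmt7_general P α L hα hreg D hD
end
end

section
/- Let Γ and Γ̂ be two compact self-adjoint operators on a separable Hilbert space H admitting spectral decompositions Γ = Σ_{d≥1} μ_d ⟨·, η_d⟩ η_d and Γ̂ = Σ_{d≥1} μ̂_d ⟨·, η̂_d⟩ η̂_d, where (η_d)_{d≥1} and (η̂_d)_{d≥1} are orthonormal families and the eigenvalue sequences (μ_d)_{d≥1} and (μ̂_d)_{d≥1} are sorted in decreasing order. Fix d ≥ 1 and suppose the eigenspace of Γ associated with μ_d is one-dimensional, with strict gaps μ_{d−1} > μ_d > μ_{d+1} (only μ_1 > μ_2 when d = 1). Set b_1 = 8(μ_1−μ_2)^{−2} and, for d ≥ 2, b_d = 8/min(μ_d−μ_{d+1}, μ_{d−1}−μ_d)². Then ‖η̂_d − sign(⟨η̂_d, η_d⟩) η_d‖ ≤ b_d^{1/2} ‖Γ̂ − Γ‖_∞, where ‖·‖_∞ is the operator norm on H. -/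
/-!
Weyl's inequality `|μ̂_d - μ_d| ≤ ‖Γ̂ - Γ‖` follows from the min-max principle: a unit vector in
the span of `η_0, …, η_d` orthogonal to `η̂_0, …, η̂_{d-1}` exists by counting dimensions, and it
has Rayleigh quotient at least `μ_d` for `Γ` and at most `μ̂_d` for `Γ̂`. The second bound needs
`μ̂_d ≥ 0`, since `Γ̂` kills the part of a vector orthogonal to all `η̂_j`; compactness gives it,
as the eigenvalues along an orthonormal sequence of eigenvectors tend to `0` and are decreasing.

Write `u = η̂_d`, `c_j = ⟨η_j, u⟩` and `v = (Γ̂ - Γ) u = μ̂_d u - Γ u`. Expanding,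
`‖v‖² = μ̂_d² (1 - ∑ c_j²) + ∑ (μ̂_d - μ_j)² c_j²`. If `‖Γ̂ - Γ‖ < g/2`, where `g` is the gap
around `μ_d`, then Weyl's inequality makes `μ̂_d` and all `|μ̂_d - μ_j|` with `j ≠ d` at least
`g/2`, so `(g/2)² (1 - c_d²) ≤ ‖v‖² ≤ ‖Γ̂ - Γ‖²`; otherwise that bound is trivial. Finally
`‖u - sign(c_d) η_d‖² = 2 - 2|c_d| ≤ 2 (1 - c_d²)`.
-/

open scoped RealInnerProductSpace

noncomputable section

open Filter

def spectralGap (μ : ℕ → ℝ) (d : ℕ) : ℝ :=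
  if d = 0 then μ 0 - μ 1 else min (μ d - μ (d + 1)) (μ (d - 1) - μ d)

theorem bGap_eq (μ : ℕ → ℝ) (d : ℕ) : bGap μ d = 8 / spectralGap μ d ^ 2 := by
  unfold bGap spectralGap
  split_ifs <;> rfl

theorem spectralGap_pos {μ : ℕ → ℝ} {d : ℕ}
    (hgap : (d = 0 → μ 1 < μ 0) ∧ (d ≠ 0 → μ d < μ (d - 1) ∧ μ (d + 1) < μ d)) :
    0 < spectralGap μ d := by
  unfold spectralGap
  split_ifs with hd
  · exact sub_pos.2 (hgap.1 hd)
  · obtain ⟨h₁, h₂⟩ := hgap.2 hd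
    exact lt_min (sub_pos.2 h₂) (sub_pos.2 h₁)

theorem Antitone.spectralGap_nonneg {μ : ℕ → ℝ} (hmono : Antitone μ) (d : ℕ) :
    0 ≤ spectralGap μ d := by
  unfold spectralGap
  split_ifs
  · exact sub_nonneg.2 (hmono zero_le_one)
  · exact le_min (sub_nonneg.2 (hmono d.le_succ)) (sub_nonneg.2 (hmono (d.sub_le 1)))

theorem Antitone.spectralGap_le_abs_sub {μ : ℕ → ℝ} (hmono : Antitone μ) {d j : ℕ} (hj : j ≠ d) :
    spectralGap μ d ≤ |μ j - μ d| := by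
  unfold spectralGap
  rcases lt_or_gt_of_ne hj with hjd | hdj
  · have hd : d ≠ 0 := by omega
    have := hmono (show j ≤ d - 1 by omega)
    rw [if_neg hd, abs_of_nonneg (by linarith [hmono hjd.le])]
    exact (min_le_right _ _).trans (by linarith)
  · have := hmono (show d + 1 ≤ j by omega)
    rw [abs_of_nonpos (by linarith [hmono hdj.le]), neg_sub]
    split_ifs with hd
    · subst hd; linarith
    · exact (min_le_left _ _).trans (by linarith)

section InnerProductSpace

variable {ι H : Type*} [NormedAddCommGroup H] [InnerProductSpace ℝ H]

theorem Orthonormal.norm_smul_sub_smul_sq {η : ι → H} (hon : Orthonormal ℝ η) {i j : ι}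
    (hij : i ≠ j) (a b : ℝ) : ‖a • η i - b • η j‖ ^ 2 = a ^ 2 + b ^ 2 := by
  rw [norm_sub_sq_real, norm_smul, norm_smul, real_inner_smul_left, real_inner_smul_right,
    hon.2 hij, hon.1, hon.1, Real.norm_eq_abs, Real.norm_eq_abs]
  simp

theorem Orthonormal.hasSum_inner_sq {η : ι → H} (hon : Orthonormal ℝ η) (u : H) :
    HasSum (fun j ↦ ⟪η j, u⟫ ^ 2) (∑' j, ⟪η j, u⟫ ^ 2) := by
  simpa using (hon.inner_products_summable (x := u)).hasSum

theorem Orthonormal.tsum_inner_sq_le {η : ι → H} (hon : Orthonormal ℝ η) (u : H) :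
    ∑' j, ⟪η j, u⟫ ^ 2 ≤ ‖u‖ ^ 2 := by
  simpa using hon.tsum_inner_products_le (x := u)

theorem HasSum.mul_inner {a : ι → ℝ} {η : ι → H} {y : H} (h : HasSum (fun j ↦ a j • η j) y)
    (u : H) : HasSum (fun j ↦ a j * ⟪η j, u⟫) ⟪y, u⟫ :=
  real_inner_comm u y ▸ (h.mapL (innerSL ℝ u)).congr_fun fun j ↦ by
    rw [innerSL_apply_apply, real_inner_smul_right, real_inner_comm]

theorem Orthonormal.inner_eq_of_hasSum {η : ι → H} (hon : Orthonormal ℝ η) {a : ι → ℝ} {y : H}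
    (h : HasSum (fun j ↦ a j • η j) y) (k : ι) : ⟪η k, y⟫ = a k := by
  have hk := (h.mapL (innerSL ℝ (η k))).unique <| hasSum_single k fun j hj ↦ by
    simp [hon.2 hj.symm]
  simpa [real_inner_smul_right, hon.1 k] using hk

theorem Orthonormal.hasSum_sq_inner_smul_sub {η : ι → H} (hon : Orthonormal ℝ η) {a : ι → ℝ}
    {y : H} (h : HasSum (fun j ↦ a j • η j) y) (t : ℝ) (u : H) :
    HasSum (fun j ↦ (t * ⟪η j, u⟫ - a j) ^ 2)
      (‖t • u - y‖ ^ 2 - t ^ 2 * (‖u‖ ^ 2 - ∑' j, ⟪η j, u⟫ ^ 2)) := by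
  have hy : HasSum (fun j ↦ a j ^ 2) (‖y‖ ^ 2) := by
    rw [← real_inner_self_eq_norm_sq]
    exact (h.mul_inner y).congr_fun fun j ↦ by rw [hon.inner_eq_of_hasSum h, sq]
  have hnorm : ‖t • u - y‖ ^ 2 - t ^ 2 * (‖u‖ ^ 2 - ∑' j, ⟪η j, u⟫ ^ 2)
      = t ^ 2 * ∑' j, ⟪η j, u⟫ ^ 2 - 2 * t * ⟪y, u⟫ + ‖y‖ ^ 2 := by
    rw [norm_sub_sq_real, norm_smul, real_inner_smul_left, Real.norm_eq_abs, mul_pow, sq_abs,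
      real_inner_comm]
    ring
  rw [hnorm]
  exact (((hon.hasSum_inner_sq u).mul_left (t ^ 2)).sub ((h.mul_inner u).mul_left (2 * t))).add hy
    |>.congr_fun fun j ↦ by ring

theorem IsCompactOperator.frequently_abs_lt {A : H →L[ℝ] H} (hc : IsCompactOperator A)
    {μ : ℕ → ℝ} {η : ℕ → H} (hon : Orthonormal ℝ η) (heig : ∀ k, A (η k) = μ k • η k)
    {δ : ℝ} (hδ : 0 < δ) : ∃ᶠ k in atTop, |μ k| < δ := by
  obtain ⟨K, hK, hAK⟩ :=
    (show IsCompactOperator A.toLinearMap from hc).image_closedBall_subset_compact 1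
  obtain ⟨z, -, φ, hφ, hlim⟩ :=
    hK.tendsto_subseq fun k ↦ hAK ⟨η k, by simp [hon.1 k], rfl⟩
  obtain ⟨M, hM⟩ := eventually_atTop.mp (hlim.eventually (Metric.ball_mem_nhds z (half_pos hδ)))
  refine frequently_atTop.mpr fun N ↦ ⟨φ (max N M), (le_max_left N M).trans (hφ.id_le _), ?_⟩
  set n := max N M
  have hclose : dist (A (η (φ n))) (A (η (φ (n + 1)))) < δ :=
    calc _ ≤ dist (A (η (φ n))) z + dist (A (η (φ (n + 1)))) z := dist_triangle_right _ _ _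
      _ < δ / 2 + δ / 2 := add_lt_add (hM n (le_max_right N M)) (hM (n + 1) (by omega))
      _ = δ := add_halves δ
  rw [dist_eq_norm, heig, heig, ← sq_lt_sq₀ (norm_nonneg _) hδ.le,
    hon.norm_smul_sub_smul_sq (hφ.injective.ne n.lt_succ_self.ne)] at hclose
  exact abs_lt_of_sq_lt_sq (by nlinarith [sq_nonneg (μ (φ (n + 1)))]) hδ.le

theorem IsCompactOperator.nonneg_of_antitone {A : H →L[ℝ] H} (hc : IsCompactOperator A)
    {μ : ℕ → ℝ} {η : ℕ → H} (hon : Orthonormal ℝ η) (heig : ∀ k, A (η k) = μ k • η k)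
    (hmono : Antitone μ) (k : ℕ) : 0 ≤ μ k := by
  by_contra! hk
  obtain ⟨j, hkj, hj⟩ := frequently_atTop.mp (hc.frequently_abs_lt hon heig (neg_pos.2 hk)) k
  have := hmono hkj
  rw [abs_lt] at hj
  linarith [hj.2]

theorem apply_eq_smul_of_eq_tsum {A : H →L[ℝ] H} {μ : ι → ℝ} {η : ι → H}
    (hon : Orthonormal ℝ η) (hA : ∀ f, A f = ∑' j, (μ j * ⟪η j, f⟫) • η j) (k : ι) :
    A (η k) = μ k • η k := by
  rw [hA, tsum_eq_single k fun j hjk ↦ by simp [hon.2 hjk], real_inner_self_eq_norm_sq, hon.1 k]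
  simp

theorem exists_ne_zero_inner_sum_eq_zero (η ξ : ℕ → H) (d : ℕ) :
    ∃ b : Fin (d + 1) → ℝ, b ≠ 0 ∧ ∀ j < d, ⟪ξ j, ∑ i, b i • η i⟫ = 0 := by
  let T : (Fin (d + 1) → ℝ) →ₗ[ℝ] (Fin d → ℝ) := LinearMap.pi fun j ↦
    (innerₛₗ ℝ (ξ j)).comp (Fintype.linearCombination ℝ fun i : Fin (d + 1) ↦ η i)
  obtain ⟨b, hb, hb0⟩ := Submodule.ne_bot_iff _ |>.mp <|
    LinearMap.ker_ne_bot_of_finrank_lt (f := T) (by simp)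
  refine ⟨b, hb0, fun j hj ↦ ?_⟩
  simpa [T, Fintype.linearCombination_apply] using congrFun hb ⟨j, hj⟩

theorem le_inner_apply_sum_self {A : H →L[ℝ] H} {μ : ℕ → ℝ} {η : ℕ → H}
    (hon : Orthonormal ℝ η) (heig : ∀ k, A (η k) = μ k • η k) (hmono : Antitone μ) {d : ℕ}
    (b : Fin (d + 1) → ℝ) :
    μ d * ‖∑ i, b i • η i‖ ^ 2 ≤ ⟪A (∑ i, b i • η i), ∑ i, b i • η i⟫ := by
  have hon' : Orthonormal ℝ fun i : Fin (d + 1) ↦ η i := hon.comp _ Fin.val_injective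
  have hA : A (∑ i, b i • η i) = ∑ i : Fin (d + 1), (μ i * b i) • η i := by
    simp [map_sum, map_smul, heig, smul_smul, mul_comm]
  rw [← real_inner_self_eq_norm_sq, hA, hon'.inner_sum, hon'.inner_sum, Finset.mul_sum]
  refine Finset.sum_le_sum fun i _ ↦ ?_
  have := hmono (Nat.lt_succ_iff.mp i.isLt)
  simp only [conj_trivial]
  nlinarith [mul_self_nonneg (b i)]

theorem inner_apply_self_le {A : H →L[ℝ] H} {μ : ℕ → ℝ} {η : ℕ → H}
    (hon : Orthonormal ℝ η) (hA : ∀ f, A f = ∑' j, (μ j * ⟪η j, f⟫) • η j) (hmono : Antitone μ)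
    {d : ℕ} (hd : 0 ≤ μ d) {x : H} (hx : ∀ j < d, ⟪η j, x⟫ = 0) :
    ⟪A x, x⟫ ≤ μ d * ‖x‖ ^ 2 := by
  -- `H` need not be complete: where the series diverges, `A x = 0` is the `tsum` junk value.
  by_cases hs : Summable fun j ↦ (μ j * ⟪η j, x⟫) • η j
  · have hq : HasSum (fun j ↦ μ j * ⟪η j, x⟫ ^ 2) ⟪A x, x⟫ :=
      (hA x ▸ hs.hasSum).mul_inner x |>.congr_fun fun j ↦ by ring
    calc ⟪A x, x⟫ ≤ μ d * ∑' j, ⟪η j, x⟫ ^ 2 := by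
          refine hasSum_le (fun j ↦ ?_) hq ((hon.hasSum_inner_sq x).mul_left (μ d))
          rcases lt_or_ge j d with hj | hj
          · simp [hx j hj]
          · exact mul_le_mul_of_nonneg_right (hmono hj) (sq_nonneg _)
      _ ≤ μ d * ‖x‖ ^ 2 := by gcongr; exact hon.tsum_inner_sq_le x
  · rw [hA x, tsum_eq_zero_of_not_summable hs, inner_zero_left]
    positivity

theorem eigenvalue_le_add_norm_sub {A B : H →L[ℝ] H} {μA μB : ℕ → ℝ} {ηA ηB : ℕ → H}
    (honA : Orthonormal ℝ ηA) (honB : Orthonormal ℝ ηB)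
    (heigA : ∀ k, A (ηA k) = μA k • ηA k) (hB : ∀ f, B f = ∑' j, (μB j * ⟪ηB j, f⟫) • ηB j)
    (hmonoA : Antitone μA) (hmonoB : Antitone μB) {d : ℕ} (hd : 0 ≤ μB d) :
    μA d ≤ μB d + ‖B - A‖ := by
  obtain ⟨b, hb0, horth⟩ := exists_ne_zero_inner_sum_eq_zero ηA ηB d
  set x := ∑ i, b i • ηA i
  have hx : 0 < ‖x‖ ^ 2 := by
    refine pow_pos (norm_pos_iff.mpr fun hx ↦ hb0 ?_) 2
    exact funext <| Fintype.linearIndependent_iff.mp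
      ((honA.comp _ Fin.val_injective).linearIndependent) b hx
  have hperturb : ⟪A x, x⟫ - ⟪B x, x⟫ ≤ ‖B - A‖ * ‖x‖ ^ 2 := by
    calc ⟪A x, x⟫ - ⟪B x, x⟫ = -⟪(B - A) x, x⟫ := by
          rw [sub_apply, inner_sub_left]; ring
      _ ≤ ‖(B - A) x‖ * ‖x‖ := (neg_le_abs _).trans (abs_real_inner_le_norm _ _)
      _ ≤ ‖B - A‖ * ‖x‖ * ‖x‖ := by gcongr; exact (B - A).le_opNorm x
      _ = ‖B - A‖ * ‖x‖ ^ 2 := by ring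
  have := le_inner_apply_sum_self honA heigA hmonoA b
  have := inner_apply_self_le honB hB hmonoB hd horth
  nlinarith

theorem abs_eigenvalue_sub_le_norm_sub {A B : H →L[ℝ] H} {μA μB : ℕ → ℝ} {ηA ηB : ℕ → H}
    (honA : Orthonormal ℝ ηA) (honB : Orthonormal ℝ ηB)
    (hA : ∀ f, A f = ∑' j, (μA j * ⟪ηA j, f⟫) • ηA j)
    (hB : ∀ f, B f = ∑' j, (μB j * ⟪ηB j, f⟫) • ηB j)
    (hmonoA : Antitone μA) (hmonoB : Antitone μB) {d : ℕ} (hdA : 0 ≤ μA d) (hdB : 0 ≤ μB d) :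
    |μB d - μA d| ≤ ‖B - A‖ := by
  refine abs_sub_le_iff.2 ⟨?_, ?_⟩
  · have := eigenvalue_le_add_norm_sub honB honA (apply_eq_smul_of_eq_tsum honB hB) hA
      hmonoB hmonoA hdA
    rw [norm_sub_rev] at this
    linarith
  · linarith [eigenvalue_le_add_norm_sub honA honB (apply_eq_smul_of_eq_tsum honA hA) hB
      hmonoA hmonoB hdB]

theorem sq_mul_one_sub_inner_sq_le {A : H →L[ℝ] H} {μ : ι → ℝ} {η : ι → H}
    (hon : Orthonormal ℝ η) (hA : ∀ f, A f = ∑' j, (μ j * ⟪η j, f⟫) • η j) {u : H}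
    (hu : ‖u‖ = 1) {t δ : ℝ} (hδ : 0 ≤ δ) (ht : δ ≤ |t|) {d : ι}
    (hsep : ∀ j ≠ d, δ ≤ |t - μ j|) :
    δ ^ 2 * (1 - ⟪η d, u⟫ ^ 2) ≤ ‖t • u - A u‖ ^ 2 := by
  classical
  have ht2 : δ ^ 2 ≤ t ^ 2 := sq_abs t ▸ pow_le_pow_left₀ hδ ht 2
  by_cases hs : Summable fun j ↦ (μ j * ⟪η j, u⟫) • η j
  · have hcoeff := hon.hasSum_sq_inner_smul_sub (hA u ▸ hs.hasSum) t u
    have hS : ∑' j, ⟪η j, u⟫ ^ 2 ≤ 1 := by simpa [hu] using hon.tsum_inner_sq_le u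
    have hlower : HasSum (fun j ↦ δ ^ 2 * ⟪η j, u⟫ ^ 2 - if j = d then δ ^ 2 * ⟪η d, u⟫ ^ 2 else 0)
        (δ ^ 2 * ∑' j, ⟪η j, u⟫ ^ 2 - δ ^ 2 * ⟪η d, u⟫ ^ 2) :=
      ((hon.hasSum_inner_sq u).mul_left (δ ^ 2)).sub (hasSum_ite_eq d _)
    have key := hasSum_le (fun j ↦ ?_) hlower hcoeff
    · rw [hu] at key
      nlinarith [mul_nonneg (sub_nonneg.2 ht2) (sub_nonneg.2 hS)]
    rcases eq_or_ne j d with rfl | hj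
    · simp only [if_true, sub_self]; positivity
    · rw [if_neg hj, sub_zero, ← sub_mul, mul_pow]
      exact mul_le_mul_of_nonneg_right
        (sq_abs (t - μ j) ▸ pow_le_pow_left₀ hδ (hsep j hj) 2) (sq_nonneg _)
  · rw [hA u, tsum_eq_zero_of_not_summable hs, sub_zero, norm_smul, hu, mul_one,
      Real.norm_eq_abs, sq_abs]
    nlinarith [sq_nonneg ⟪η d, u⟫, sq_nonneg δ]

theorem norm_sub_sign_smul_sq_le {u e : H} (hu : ‖u‖ = 1) (he : ‖e‖ = 1) :
    ‖u - (if 0 ≤ ⟪u, e⟫ then (1 : ℝ) else -1) • e‖ ^ 2 ≤ 2 * (1 - ⟪u, e⟫ ^ 2) := by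
  have hc : |⟪u, e⟫| ≤ 1 := by simpa [hu, he] using abs_real_inner_le_norm u e
  rw [norm_sub_sq_real, norm_smul, real_inner_smul_right, hu, he]
  rw [abs_le] at hc
  split_ifs <;> norm_num <;> nlinarith

theorem spectralGap_sq_mul_one_sub_inner_sq_le {A B : H →L[ℝ] H} {μA μB : ℕ → ℝ}
    {ηA ηB : ℕ → H} (honA : Orthonormal ℝ ηA) (honB : Orthonormal ℝ ηB)
    (hA : ∀ f, A f = ∑' j, (μA j * ⟪ηA j, f⟫) • ηA j)
    (hB : ∀ f, B f = ∑' j, (μB j * ⟪ηB j, f⟫) • ηB j)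
    (hmonoA : Antitone μA) (hmonoB : Antitone μB) (hnnA : ∀ k, 0 ≤ μA k) {d : ℕ}
    (hnnB : 0 ≤ μB d) :
    (spectralGap μA d / 2) ^ 2 * (1 - ⟪ηA d, ηB d⟫ ^ 2) ≤ ‖B - A‖ ^ 2 := by
  set g := spectralGap μA d
  set ε := ‖B - A‖
  have hweyl : |μB d - μA d| ≤ ε :=
    abs_eigenvalue_sub_le_norm_sub honA honB hA hB hmonoA hmonoB (hnnA d) hnnB
  have hg := hmonoA.spectralGap_nonneg d
  rcases le_or_gt g (2 * ε) with hbig | hsmall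
  · nlinarith [sq_nonneg ⟪ηA d, ηB d⟫]
  have hgμ : g ≤ μA d := by
    have := hmonoA.spectralGap_le_abs_sub d.succ_ne_self
    rw [abs_of_nonpos (sub_nonpos.2 (hmonoA d.le_succ))] at this
    linarith [hnnA (d + 1)]
  have hsep : ∀ j ≠ d, g / 2 ≤ |μB d - μA j| := fun j hj ↦ by
    linarith [hmonoA.spectralGap_le_abs_sub hj, abs_sub_le (μA j) (μB d) (μA d),
      abs_sub_comm (μA j) (μB d)]
  calc (g / 2) ^ 2 * (1 - ⟪ηA d, ηB d⟫ ^ 2) ≤ ‖μB d • ηB d - A (ηB d)‖ ^ 2 :=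
        sq_mul_one_sub_inner_sq_le honA hA (honB.1 d) (by positivity)
          (le_abs.2 (Or.inl (by linarith [(abs_le.1 hweyl).1]))) hsep
    _ ≤ ε ^ 2 := by
        rw [← apply_eq_smul_of_eq_tsum honB hB, ← sub_apply]
        gcongr
        simpa [honB.1 d] using (B - A).le_opNorm (ηB d)

end InnerProductSpace

theorem stmt13_general {H : Type*} [NormedAddCommGroup H] [InnerProductSpace ℝ H]
    (Γ Γh : H →L[ℝ] H)
    (hΓc : IsCompactOperator (⇑Γ)) (hΓhc : IsCompactOperator (⇑Γh))
    (μ μh : ℕ → ℝ) (η ηh : ℕ → H)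
    (hon : Orthonormal ℝ η) (honh : Orthonormal ℝ ηh)
    (hmono : Antitone μ) (hmonoh : Antitone μh)
    (hdec : ∀ f : H, Γ f = ∑' d, (μ d * ⟪η d, f⟫) • η d)
    (hdech : ∀ f : H, Γh f = ∑' d, (μh d * ⟪ηh d, f⟫) • ηh d)
    (d : ℕ)
    (hgap : (d = 0 → μ 1 < μ 0) ∧ (d ≠ 0 → μ d < μ (d - 1) ∧ μ (d + 1) < μ d)) :
    ‖ηh d - (if 0 ≤ ⟪ηh d, η d⟫ then (1 : ℝ) else -1) • η d‖
      ≤ Real.sqrt (bGap μ d) * ‖Γh - Γ‖ := by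
  have hnn := hΓc.nonneg_of_antitone hon (apply_eq_smul_of_eq_tsum hon hdec) hmono
  have hnnh := hΓhc.nonneg_of_antitone honh (apply_eq_smul_of_eq_tsum honh hdech) hmonoh
  have hkey := spectralGap_sq_mul_one_sub_inner_sq_le hon honh hdec hdech hmono hmonoh hnn (hnnh d)
  have hg := spectralGap_pos hgap
  have hsq : ‖ηh d - (if 0 ≤ ⟪ηh d, η d⟫ then (1 : ℝ) else -1) • η d‖ ^ 2
      ≤ bGap μ d * ‖Γh - Γ‖ ^ 2 := by
    refine (norm_sub_sign_smul_sq_le (honh.1 d) (hon.1 d)).trans ?_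
    rw [bGap_eq, real_inner_comm, div_mul_eq_mul_div, le_div_iff₀ (by positivity)]
    nlinarith
  have := Real.sqrt_le_sqrt hsq
  rwa [Real.sqrt_sq (norm_nonneg _), Real.sqrt_mul' _ (sq_nonneg _),
    Real.sqrt_sq (norm_nonneg _)] at this

/-- Bosq's inequality for eigenfunctions: if `Γ` and `Γ̂` are compact self-adjoint operators
on a separable Hilbert space with spectral decompositions as above, eigenvalues sorted in
decreasing order, and if the eigenspace of `Γ` at `μ_d` is one-dimensional with strict gaps
to its neighbours, then `‖η̂_d - sign(⟨η̂_d, η_d⟩) η_d‖ ≤ b_d^{1/2} ‖Γ̂ - Γ‖_∞`. -/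
theorem stmt13 {H : Type*} [NormedAddCommGroup H] [InnerProductSpace ℝ H]
    [SecondCountableTopology H]
    (Γ Γh : H →L[ℝ] H)
    (hΓc : IsCompactOperator (⇑Γ)) (hΓhc : IsCompactOperator (⇑Γh))
    (hΓsa : ∀ x y : H, ⟪Γ x, y⟫ = ⟪x, Γ y⟫)
    (hΓhsa : ∀ x y : H, ⟪Γh x, y⟫ = ⟪x, Γh y⟫)
    (μ μh : ℕ → ℝ) (η ηh : ℕ → H)
    (hon : Orthonormal ℝ η) (honh : Orthonormal ℝ ηh)
    (hmono : Antitone μ) (hmonoh : Antitone μh)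
    (hdec : ∀ f : H, Γ f = ∑' d, (μ d * ⟪η d, f⟫) • η d)
    (hdech : ∀ f : H, Γh f = ∑' d, (μh d * ⟪ηh d, f⟫) • ηh d)
    (d : ℕ)
    (hgap : (d = 0 → μ 1 < μ 0) ∧ (d ≠ 0 → μ d < μ (d - 1) ∧ μ (d + 1) < μ d))
    (hsimple : ∀ f : H, Γ f = μ d • f → ∃ c : ℝ, f = c • η d) :
    ‖ηh d - (if 0 ≤ ⟪ηh d, η d⟫ then (1 : ℝ) else -1) • η d‖
      ≤ Real.sqrt (bGap μ d) * ‖Γh - Γ‖ :=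
  stmt13_general Γ Γh hΓc hΓhc μ μh η ηh hon honh hmono hmonoh hdec hdech d hgap
end
end

section
/- For every α ∈ (0,1], L > 0 and integer p ≥ 2, there exist a constant c > 0 depending only on α and two centered Gaussian processes Z_0 and Z_1 defined on a common probability space such that: (i) the laws of Z_0 and Z_1 both belong to R_α(L); (ii) Z_0(t_h) = Z_1(t_h) almost surely for every h = 0,…,p−1, where t_h = h/(p−1); (iii) the covariance operator of Z_j (j = 0,1) has rank one, with unit-norm top eigenfunction η_j ∈ L²([0,1]); and (iv) min(‖η_0 − η_1‖², ‖η_0 + η_1‖²) ≥ c p^{−2α}. -/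
/-
With `X ~ N(0,1)`, take `Z₀(t) = κ X / N` and `Z₁(t) = κ X η(t)`, where
`η(t) = (1 + δ sin(2π(p-1)t)) / N`, `δ = p^{-α}` and `N = √(1 + δ²/2)` is the `L²[0,1]` norm of
`1 + δ sin(2π(p-1)t)`. Both processes are rank one with eigenfunctions `1` and `η`. The sine
vanishes at every `t_h = h/(p-1)`, so `Z₀ = Z₁` on the grid. The increments of `Z₁` are bounded by
`κ δ 2π(p-1) |t - s|`, and choosing `κ` to make this amplitude `√L` gives Lipschitz, hence
`α`-Hölder, increments on `[0,1]`. Finally `‖1 ∓ η‖² ≥ (δ/N)²/2 ≥ δ²/3 = p^{-2α}/3`.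
-/

open MeasureTheory ProbabilityTheory

noncomputable section

open Real Set

lemma integral_sq_gaussianReal_zero_one : ∫ x, x ^ 2 ∂gaussianReal 0 1 = 1 := by
  rw [← variance_of_integral_eq_zero (X := fun x => x) aemeasurable_id integral_id_gaussianReal]
  exact variance_fun_id_gaussianReal

def rankOnePath (f : ℝ → ℝ) (x : ℝ) : ℝ → ℝ := fun t => x * f t

def rankOneLaw (f : ℝ → ℝ) : Measure (ℝ → ℝ) := (gaussianReal 0 1).map (rankOnePath f)

section RankOne

variable (f : ℝ → ℝ)

@[fun_prop]
lemma measurable_rankOnePath : Measurable (rankOnePath f) :=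
  measurable_pi_lambda _ fun t => measurable_id.mul_const (f t)

instance : IsProbabilityMeasure (rankOneLaw f) :=
  Measure.isProbabilityMeasure_map (measurable_rankOnePath f).aemeasurable

lemma integral_rankOneLaw_of_eq_sq_mul {F : (ℝ → ℝ) → ℝ} (hF : Measurable F) (q : ℝ)
    (hq : ∀ x, F (rankOnePath f x) = x ^ 2 * q) : ∫ ω, F ω ∂rankOneLaw f = q := by
  rw [rankOneLaw, integral_map (by fun_prop) hF.aestronglyMeasurable]
  simp only [hq, integral_mul_const, integral_sq_gaussianReal_zero_one, one_mul]

lemma covK_rankOneLaw (s t : ℝ) : covK (rankOneLaw f) s t = f s * f t :=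
  integral_rankOneLaw_of_eq_sq_mul f (by fun_prop) _ fun x => by simp only [rankOnePath]; ring

lemma integral_eval_rankOneLaw (t : ℝ) : ∫ ω, ω t ∂rankOneLaw f = 0 := by
  rw [rankOneLaw, integral_map (f := fun ω : ℝ → ℝ => ω t) (by fun_prop)
    (measurable_pi_apply t).aestronglyMeasurable]
  simp only [rankOnePath, integral_mul_const, integral_id_gaussianReal, zero_mul]

lemma integrable_sq_eval_rankOneLaw (t : ℝ) : Integrable (fun ω => ω t ^ 2) (rankOneLaw f) := by
  rw [rankOneLaw, integrable_map_measure (g := fun ω : ℝ → ℝ => ω t ^ 2)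
    ((measurable_pi_apply t).pow_const 2).aestronglyMeasurable (by fun_prop)]
  simp only [Function.comp_def, rankOnePath, mul_pow]
  exact ((memLp_id_gaussianReal 2).integrable_sq).mul_const _

lemma memReg_rankOneLaw {α L : ℝ}
    (hf : ∀ s ∈ unitI, ∀ t ∈ unitI, (f t - f s) ^ 2 ≤ L * |t - s| ^ (2 * α)) :
    memReg α L (rankOneLaw f) := by
  refine ⟨inferInstance, fun t _ => integrable_sq_eval_rankOneLaw f t,
    fun t _ => integral_eval_rankOneLaw f t, fun s hs t ht => ?_⟩
  rw [integral_rankOneLaw_of_eq_sq_mul f (by fun_prop) ((f t - f s) ^ 2)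
    fun x => by simp only [rankOnePath]; ring]
  exact hf s hs t ht

lemma isGaussP_rankOneLaw : isGaussP (rankOneLaw f) := by
  intro m c ts _
  have hΦ : Measurable fun ω : ℝ → ℝ => ∑ i, c i * ω (ts i) := by fun_prop
  set b := ∑ i, c i * f (ts i)
  have hΦf : (fun ω : ℝ → ℝ => ∑ i, c i * ω (ts i)) ∘ rankOnePath f = (b * ·) := by
    ext x
    simp only [Function.comp_apply, rankOnePath, b, Finset.sum_mul]
    exact Finset.sum_congr rfl fun i _ => by ring
  rw [integral_rankOneLaw_of_eq_sq_mul f (hΦ.pow_const 2) (b ^ 2) fun x => by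
      rw [← Function.comp_apply (f := fun ω : ℝ → ℝ => (∑ i, c i * ω (ts i))), hΦf]; ring,
    rankOneLaw, Measure.map_map hΦ (by fun_prop), hΦf, gaussianReal_map_const_mul, mul_zero]
  congr 1
  ext
  simp [Real.coe_toNNReal _ (sq_nonneg b)]

end RankOne

def rankOneCoupling (f g : ℝ → ℝ) : Measure ((ℝ → ℝ) × (ℝ → ℝ)) :=
  (gaussianReal 0 1).map fun x => (rankOnePath f x, rankOnePath g x)

section Coupling

variable (f g : ℝ → ℝ)

instance : IsProbabilityMeasure (rankOneCoupling f g) :=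
  Measure.isProbabilityMeasure_map (by fun_prop)

lemma rankOneCoupling_map_fst : (rankOneCoupling f g).map Prod.fst = rankOneLaw f := by
  rw [rankOneCoupling, Measure.map_map measurable_fst (by fun_prop)]
  rfl

lemma rankOneCoupling_map_snd : (rankOneCoupling f g).map Prod.snd = rankOneLaw g := by
  rw [rankOneCoupling, Measure.map_map measurable_snd (by fun_prop)]
  rfl

lemma ae_rankOneCoupling_eq {t : ℝ} (h : f t = g t) :
    ∀ᵐ ω ∂rankOneCoupling f g, ω.1 t = ω.2 t := by
  rw [rankOneCoupling, ae_map_iff (by fun_prop) (measurableSet_eq_fun (by fun_prop) (by fun_prop))]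
  exact .of_forall fun x => by simp only [rankOnePath, h]

end Coupling

lemma sq_le_abs_rpow_of_mem_unitI {α s t : ℝ} (hα : α ∈ Ioc 0 1) (hs : s ∈ unitI) (ht : t ∈ unitI) :
    (t - s) ^ 2 ≤ |t - s| ^ (2 * α) := by
  have h1 : |t - s| ≤ 1 := abs_sub_le_iff.2 ⟨by linarith [ht.2, hs.1], by linarith [hs.2, ht.1]⟩
  rw [← sq_abs, ← rpow_natCast]
  exact rpow_le_rpow_of_exponent_ge' (abs_nonneg _) h1 (by linarith [hα.1]) (by push_cast; linarith [hα.2])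

lemma memReg_rankOneLaw_const {α L : ℝ} (hL : 0 ≤ L) (c : ℝ) :
    memReg α L (rankOneLaw fun _ => c) :=
  memReg_rankOneLaw _ fun s _ t _ => by
    simp only [sub_self, ne_eq, OfNat.ofNat_ne_zero, not_false_eq_true, zero_pow]
    positivity

lemma memReg_rankOneLaw_of_sq_sub_le {α L : ℝ} {f : ℝ → ℝ} (hα : α ∈ Ioc 0 1) (hL : 0 ≤ L)
    (hf : ∀ s t, (f t - f s) ^ 2 ≤ L * (t - s) ^ 2) : memReg α L (rankOneLaw f) :=
  memReg_rankOneLaw f fun s hs t ht =>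
    (hf s t).trans (mul_le_mul_of_nonneg_left (sq_le_abs_rpow_of_mem_unitI hα hs ht) hL)

section Sine

variable {n : ℕ} (hn : n ≠ 0)
include hn

lemma integral_unitI_sin_two_pi_mul : ∫ t in unitI, sin (2 * π * n * t) = 0 := by
  have hc : 2 * π * n ≠ 0 := by positivity
  rw [unitI, integral_Icc_eq_integral_Ioc, ← intervalIntegral.integral_of_le zero_le_one,
    intervalIntegral.integral_comp_mul_left (fun x => sin x) hc, integral_sin, mul_zero, mul_one,
    cos_zero, show 2 * π * n = n * (2 * π) by ring, cos_nat_mul_two_pi, sub_self, smul_zero]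

lemma integral_unitI_sin_two_pi_mul_sq : ∫ t in unitI, sin (2 * π * n * t) ^ 2 = 1 / 2 := by
  have hc : 2 * π * n ≠ 0 := by positivity
  rw [unitI, integral_Icc_eq_integral_Ioc, ← intervalIntegral.integral_of_le zero_le_one,
    intervalIntegral.integral_comp_mul_left (fun x => sin x ^ 2) hc, integral_sin_sq, mul_zero,
    mul_one, sin_zero, show 2 * π * n = (2 * n : ℕ) * π by push_cast; ring, sin_nat_mul_pi,
    smul_eq_mul]
  field_simp
  ring

lemma integral_unitI_sq_add_mul_sin (A B : ℝ) :
    ∫ t in unitI, (A + B * sin (2 * π * n * t)) ^ 2 = A ^ 2 + B ^ 2 / 2 := by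
  have hcont : ∀ g : ℝ → ℝ, Continuous g → IntegrableOn g unitI :=
    fun g hg => hg.integrableOn_Icc
  simp only [add_sq, mul_pow]
  rw [integral_add (hcont _ (by fun_prop)) (hcont _ (by fun_prop)),
    integral_add (hcont _ (by fun_prop)) (hcont _ (by fun_prop)), setIntegral_const,
    integral_const_mul, integral_const_mul, integral_const_mul, integral_unitI_sin_two_pi_mul hn,
    integral_unitI_sin_two_pi_mul_sq hn]
  simp [unitI]
  ring

lemma sq_div_two_le_integral_unitI_sq_add_mul_sin (A B : ℝ) :
    B ^ 2 / 2 ≤ ∫ t in unitI, (A + B * sin (2 * π * n * t)) ^ 2 := by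
  rw [integral_unitI_sq_add_mul_sin hn]
  linarith [sq_nonneg A]

end Sine

def sinePerturbation (n : ℕ) (δ t : ℝ) : ℝ := (1 + δ * sin (2 * π * n * t)) / √(1 + δ ^ 2 / 2)

section SinePerturbation

variable (n : ℕ) (δ : ℝ)

lemma sinePerturbation_grid {p : ℕ} (h : Fin p) :
    sinePerturbation (p - 1) δ (grid p h) = (√(1 + δ ^ 2 / 2))⁻¹ := by
  have hsin : sin (2 * π * (p - 1 : ℕ) * grid p h) = 0 := by
    rw [grid, Nat.cast_pred (Fin.pos h)]
    rcases eq_or_ne ((p : ℝ) - 1) 0 with hp | hp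
    · simp [hp]
    · rw [show 2 * π * ((p : ℝ) - 1) * (h / ((p : ℝ) - 1)) = (2 * h : ℕ) * π by
        push_cast; field_simp]
      exact sin_nat_mul_pi _
  rw [sinePerturbation, hsin, mul_zero, add_zero, one_div]

lemma sq_sub_sinePerturbation_le (s t : ℝ) :
    (sinePerturbation n δ t - sinePerturbation n δ s) ^ 2 ≤ (2 * π * n * δ) ^ 2 * (t - s) ^ 2 := by
  set x := 2 * π * n * t
  set y := 2 * π * n * s
  calc (sinePerturbation n δ t - sinePerturbation n δ s) ^ 2
      = (δ * (sin x - sin y)) ^ 2 / √(1 + δ ^ 2 / 2) ^ 2 := by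
        simp only [sinePerturbation]
        ring
    _ ≤ (δ * (sin x - sin y)) ^ 2 :=
        div_le_self (sq_nonneg _) (by rw [sq_sqrt (by positivity)]; linarith [sq_nonneg δ])
    _ ≤ (δ * (x - y)) ^ 2 := by
        rw [mul_pow, mul_pow]
        exact mul_le_mul_of_nonneg_left (sq_le_sq.2 (abs_sin_sub_sin_le x y)) (sq_nonneg δ)
    _ = (2 * π * n * δ) ^ 2 * (t - s) ^ 2 := by ring

variable {n} (hn : n ≠ 0)
include hn

lemma integral_unitI_sinePerturbation_sq : ∫ t in unitI, sinePerturbation n δ t ^ 2 = 1 := by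
  set N := √(1 + δ ^ 2 / 2)
  have hN : N ^ 2 = 1 + δ ^ 2 / 2 := sq_sqrt (by positivity)
  have hN0 : N ≠ 0 := by positivity
  simp_rw [show ∀ t, sinePerturbation n δ t = N⁻¹ + N⁻¹ * δ * sin (2 * π * n * t) from
    fun t => by rw [sinePerturbation]; ring]
  rw [integral_unitI_sq_add_mul_sin hn]
  field_simp
  linarith

lemma sq_div_three_le_min_integral_unitI_sinePerturbation (hδ : δ ^ 2 ≤ 1) :
    δ ^ 2 / 3 ≤ min (∫ t in unitI, (1 - sinePerturbation n δ t) ^ 2)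
      (∫ t in unitI, (1 + sinePerturbation n δ t) ^ 2) := by
  set N := √(1 + δ ^ 2 / 2)
  have hN : N ^ 2 = 1 + δ ^ 2 / 2 := sq_sqrt (by positivity)
  have hsin_coeff : δ ^ 2 / 3 ≤ (N⁻¹ * δ) ^ 2 / 2 := by
    rw [mul_pow, inv_pow, hN]
    field_simp
    nlinarith [sq_nonneg δ]
  refine le_min ?_ ?_
  · simp_rw [show ∀ t, 1 - sinePerturbation n δ t
        = (1 - N⁻¹) + (-(N⁻¹ * δ)) * sin (2 * π * n * t) from
      fun t => by rw [sinePerturbation]; ring]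
    refine hsin_coeff.trans ?_
    rw [← neg_sq]
    exact sq_div_two_le_integral_unitI_sq_add_mul_sin hn _ _
  · simp_rw [show ∀ t, 1 + sinePerturbation n δ t
        = (1 + N⁻¹) + N⁻¹ * δ * sin (2 * π * n * t) from
      fun t => by rw [sinePerturbation]; ring]
    exact hsin_coeff.trans (sq_div_two_le_integral_unitI_sq_add_mul_sin hn _ _)

lemma memReg_rankOneLaw_mul_sinePerturbation {α L : ℝ} (hα : α ∈ Ioc 0 1) (hL : 0 ≤ L)
    (hδ : δ ≠ 0) :
    memReg α L (rankOneLaw fun t => √L / (2 * π * n * δ) * sinePerturbation n δ t) := by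
  refine memReg_rankOneLaw_of_sq_sub_le hα hL fun s t => ?_
  set κ := √L / (2 * π * n * δ)
  have hκ : (κ * (2 * π * n * δ)) ^ 2 = L := by
    rw [div_mul_cancel₀ _ (mul_ne_zero (by positivity) hδ), sq_sqrt hL]
  calc (κ * sinePerturbation n δ t - κ * sinePerturbation n δ s) ^ 2
      = κ ^ 2 * (sinePerturbation n δ t - sinePerturbation n δ s) ^ 2 := by ring
    _ ≤ κ ^ 2 * ((2 * π * n * δ) ^ 2 * (t - s) ^ 2) :=
        mul_le_mul_of_nonneg_left (sq_sub_sinePerturbation_le n δ s t) (sq_nonneg κ)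
    _ = L * (t - s) ^ 2 := by rw [← hκ]; ring

end SinePerturbation

/-- Two centered Gaussian processes on a common probability space (here: the two marginals
of a law `P` on pairs of paths) that belong to `R_α(L)`, coincide almost surely on the
grid `t_h = h/(p-1)`, have rank-one covariance operators with unit-norm top eigenfunctions
`η₀, η₁`, and whose top eigenfunctions are at `L²`-distance at least `c p^{-2α}` from each
other (up to sign). -/
theorem stmt18 :
    ∀ α ∈ Set.Ioc (0 : ℝ) 1, ∃ c : ℝ, 0 < c ∧
      ∀ L : ℝ, 0 < L → ∀ p : ℕ, 2 ≤ p →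
      ∃ (P : Measure ((ℝ → ℝ) × (ℝ → ℝ))) (_ : IsProbabilityMeasure P)
        (η0 η1 : ℝ → ℝ) (μ0 μ1 : ℝ),
        memReg α L (P.map Prod.fst) ∧ memReg α L (P.map Prod.snd) ∧
        isGaussP (P.map Prod.fst) ∧ isGaussP (P.map Prod.snd) ∧
        (∀ h : Fin p, ∀ᵐ ω ∂P, ω.1 (grid p h) = ω.2 (grid p h)) ∧
        Measurable η0 ∧ Measurable η1 ∧
        (∫ t in unitI, (η0 t) ^ 2) = 1 ∧ (∫ t in unitI, (η1 t) ^ 2) = 1 ∧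
        0 < μ0 ∧ 0 < μ1 ∧
        (∀ s ∈ unitI, ∀ t ∈ unitI, covK (P.map Prod.fst) s t = μ0 * η0 s * η0 t) ∧
        (∀ s ∈ unitI, ∀ t ∈ unitI, covK (P.map Prod.snd) s t = μ1 * η1 s * η1 t) ∧
        c * (p : ℝ) ^ (-(2 * α))
          ≤ min (∫ t in unitI, (η0 t - η1 t) ^ 2) (∫ t in unitI, (η0 t + η1 t) ^ 2) := by
  intro α hα
  refine ⟨1 / 3, by norm_num, fun L hL p hp => ?_⟩
  have hn : p - 1 ≠ 0 := by omega
  set δ := (p : ℝ) ^ (-α)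
  have hδ : 0 < δ := by positivity
  have hδ1 : δ ≤ 1 := rpow_le_one_of_one_le_of_nonpos (by exact_mod_cast (by omega : 1 ≤ p))
    (by linarith [hα.1])
  set N := √(1 + δ ^ 2 / 2)
  set κ := √L / (2 * π * (p - 1 : ℕ) * δ)
  set η := sinePerturbation (p - 1) δ
  refine ⟨rankOneCoupling (fun _ => κ / N) (fun t => κ * η t), inferInstance, fun _ => 1, η,
    (κ / N) ^ 2, κ ^ 2, ?_, ?_, ?_, ?_, fun h => ae_rankOneCoupling_eq _ _ ?_, measurable_const,
    by fun_prop [sinePerturbation], by simp [unitI], integral_unitI_sinePerturbation_sq δ hn,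
    by positivity, by positivity, fun s _ t _ => ?_, fun s _ t _ => ?_, ?_⟩
  · exact rankOneCoupling_map_fst _ _ ▸ memReg_rankOneLaw_const hL.le _
  · exact rankOneCoupling_map_snd _ _ ▸
      memReg_rankOneLaw_mul_sinePerturbation δ hn hα hL.le hδ.ne'
  · exact rankOneCoupling_map_fst _ _ ▸ isGaussP_rankOneLaw _
  · exact rankOneCoupling_map_snd _ _ ▸ isGaussP_rankOneLaw _
  · simp only [η, sinePerturbation_grid]
    exact div_eq_mul_inv κ N
  · rw [rankOneCoupling_map_fst, covK_rankOneLaw]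
    ring
  · rw [rankOneCoupling_map_snd, covK_rankOneLaw]
    ring
  · rw [show -(2 * α) = -α * (2 : ℕ) by push_cast; ring,
      rpow_mul_natCast p.cast_nonneg, one_div_mul_eq_div]
    exact sq_div_three_le_min_integral_unitI_sinePerturbation δ hn (pow_le_one₀ hδ.le hδ1)
end
end
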